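/- arXiv:2109.02106 — 6 statements merged into one kernel-verified Lean document; each statement's English description precedes it below -/
import Mathlib

section
/- Let θ : ℝⁿ → ℝ be convex, X ⊆ ℝⁿ nonempty closed convex, A ∈ ℝ^{m×n}, b ∈ ℝᵐ, β > 0, δ > 0, and set M = (1/β)AAᵀ + δIₘ. Given (xᵏ, λᵏ) ∈ ℝⁿ × ℝᵐ, suppose λ̄ᵏ ∈ ℝᵐ satisfies Axᵏ − b + M(λ̄ᵏ − λᵏ) = 0 and x̄ᵏ ∈ argmin{θ(x) + (β/2)‖x − [xᵏ + (1/β)Aᵀ(2λ̄ᵏ − λᵏ)]‖² : x ∈ X}. Then, writing w̄ᵏ = (x̄ᵏ, λ̄ᵏ), wᵏ = (xᵏ, λᵏ), for every w = (x,λ) ∈ X × ℝᵐ one has θ(x) − θ(x̄ᵏ) + (w − w̄ᵏ)ᵀF(w̄ᵏ) ≥ (w − w̄ᵏ)ᵀH(wᵏ − w̄ᵏ). -/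
open Matrix Set

/-- Prediction step of the dual-primal balanced ALM: with
`M = (1/β) A Aᵀ + δ Iₘ`, if `λ̄ᵏ` solves `A xᵏ - b + M (λ̄ᵏ - λᵏ) = 0` and
`x̄ᵏ` minimizes `θ x + (β/2) ‖x - [xᵏ + (1/β) Aᵀ (2λ̄ᵏ - λᵏ)]‖²` over `X`, then for every
`w = (x,λ) ∈ X × ℝᵐ`,
`θ x - θ x̄ᵏ + (w - w̄ᵏ)ᵀ F(w̄ᵏ) ≥ (w - w̄ᵏ)ᵀ H (wᵏ - w̄ᵏ)`. -/
theorem stmt_5 {n m : ℕ} (θ : (Fin n → ℝ) → ℝ) (hθ : ConvexOn ℝ Set.univ θ)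
    (X : Set (Fin n → ℝ)) (hXne : X.Nonempty) (hXclosed : IsClosed X) (hXconv : Convex ℝ X)
    (A : Matrix (Fin m) (Fin n) ℝ) (b : Fin m → ℝ) (β δ : ℝ) (hβ : 0 < β) (hδ : 0 < δ)
    (xk xbar : Fin n → ℝ) (lk lbar : Fin m → ℝ)
    (hlbar : A *ᵥ xk - b +
      (((1 / β) • (A * Aᵀ) + δ • (1 : Matrix (Fin m) (Fin m) ℝ)) *ᵥ (lbar - lk)) = 0)
    (hxbar : xbar ∈ X ∧ ∀ x ∈ X,
      θ xbar + (β / 2) *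
        ((xbar - (xk + (1 / β) • (Aᵀ *ᵥ ((2 : ℝ) • lbar - lk)))) ⬝ᵥ
         (xbar - (xk + (1 / β) • (Aᵀ *ᵥ ((2 : ℝ) • lbar - lk))))) ≤
      θ x + (β / 2) *
        ((x - (xk + (1 / β) • (Aᵀ *ᵥ ((2 : ℝ) • lbar - lk)))) ⬝ᵥ
         (x - (xk + (1 / β) • (Aᵀ *ᵥ ((2 : ℝ) • lbar - lk)))))) :
    ∀ x ∈ X, ∀ lam : Fin m → ℝ,
      θ x - θ xbar +
        Sum.elim (x - xbar) (lam - lbar) ⬝ᵥ Sum.elim (-(Aᵀ *ᵥ lbar)) (A *ᵥ xbar - b) ≥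
      Sum.elim (x - xbar) (lam - lbar) ⬝ᵥ
        ((Matrix.fromBlocks (β • (1 : Matrix (Fin n) (Fin n) ℝ)) (-Aᵀ) (-A)
            ((1 / β) • (A * Aᵀ) + δ • (1 : Matrix (Fin m) (Fin m) ℝ))) *ᵥ
          Sum.elim (xk - xbar) (lk - lbar)) := by
  obtain ⟨hxbarX, hmin⟩ := hxbar
  intro x hx lam
  set M : Matrix (Fin m) (Fin m) ℝ :=
    (1 / β) • (A * Aᵀ) + δ • (1 : Matrix (Fin m) (Fin m) ℝ) with hMdef
  set u : Fin n → ℝ := xk + (1 / β) • (Aᵀ *ᵥ ((2 : ℝ) • lbar - lk)) with hudef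
  set q : Fin n → ℝ := x - xbar with hqdef
  set p : Fin n → ℝ := xbar - u with hpdef
  -- key variational inequality
  have hq2 : (0:ℝ) ≤ q ⬝ᵥ q := Finset.sum_nonneg fun i _ => mul_self_nonneg _
  have key : 0 ≤ θ x - θ xbar + β * (q ⬝ᵥ p) := by
    have hstep : ∀ t : ℝ, 0 < t → t ≤ 1 →
        0 ≤ θ x - θ xbar + β * (q ⬝ᵥ p) + t * ((β / 2) * (q ⬝ᵥ q)) := by
      intro t ht ht1
      have hmem : (1 - t) • xbar + t • x ∈ X :=
        hXconv hxbarX hx (by linarith) (le_of_lt ht) (by ring)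
      have hconv : θ ((1 - t) • xbar + t • x) ≤ (1 - t) * θ xbar + t * θ x :=
        hθ.2 (mem_univ xbar) (mem_univ x) (by linarith) (le_of_lt ht) (by ring)
      have hvec : (1 - t) • xbar + t • x - u = p + t • q := by
        rw [hpdef, hqdef]; module
      have hdot : ((1 - t) • xbar + t • x - u) ⬝ᵥ ((1 - t) • xbar + t • x - u)
          = p ⬝ᵥ p + 2 * t * (q ⬝ᵥ p) + t * t * (q ⬝ᵥ q) := by
        rw [hvec]
        simp only [dotProduct_add, add_dotProduct, dotProduct_smul, smul_dotProduct,
          smul_eq_mul]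
        rw [dotProduct_comm p q]
        ring
      have h1 := hmin ((1 - t) • xbar + t • x) hmem
      rw [hdot] at h1
      have h2 : 0 ≤ t * (θ x - θ xbar + β * (q ⬝ᵥ p) + t * ((β / 2) * (q ⬝ᵥ q))) := by
        nlinarith [h1, hconv]
      exact nonneg_of_mul_nonneg_right h2 ht
    -- limit argument
    set c := θ x - θ xbar + β * (q ⬝ᵥ p) with hcdef
    set e := (β / 2) * (q ⬝ᵥ q) with hedef
    have he0 : 0 ≤ e := mul_nonneg (by linarith) hq2
    have h : ∀ ε : ℝ, 0 < ε → -c ≤ 0 + ε := by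
      intro ε hε
      have hd : 0 < ε / (e + 1) := div_pos hε (by linarith)
      have htp : 0 < min 1 (ε / (e + 1)) := lt_min one_pos hd
      have h3 := hstep _ htp (min_le_left _ _)
      have h4 : min 1 (ε / (e + 1)) * e ≤ ε := by
        calc min 1 (ε / (e + 1)) * e ≤ (ε / (e + 1)) * (e + 1) :=
              mul_le_mul (min_le_right _ _) (by linarith) he0 (le_of_lt hd)
          _ = ε := div_mul_cancel₀ ε (by linarith)
      linarith
    have := le_of_forall_pos_le_add h
    linarith
  -- the λ-part: equality from hlbar
  have hM : M *ᵥ (lk - lbar) = A *ᵥ xk - b := by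
    have h2 : M *ᵥ (lk - lbar) = -(M *ᵥ (lbar - lk)) := by
      rw [← Matrix.mulVec_neg, neg_sub]
    rw [h2]
    linear_combination -hlbar
  -- expand block structure
  simp only [Matrix.fromBlocks_mulVec, Sum.elim_comp_inl, Sum.elim_comp_inr,
    sumElim_dotProduct_sumElim]
  have hlam : (lam - lbar) ⬝ᵥ ((-A) *ᵥ (xk - xbar) + M *ᵥ (lk - lbar))
      = (lam - lbar) ⬝ᵥ (A *ᵥ xbar - b) := by
    congr 1
    rw [hM, Matrix.neg_mulVec, Matrix.mulVec_sub]
    abel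
  rw [hlam]
  have hβs : β • ((1 / β) • (Aᵀ *ᵥ ((2:ℝ) • lbar - lk))) = Aᵀ *ᵥ ((2:ℝ) • lbar - lk) := by
    rw [smul_smul, mul_one_div, div_self hβ.ne', one_smul]
  have hx1 : (β • (1 : Matrix (Fin n) (Fin n) ℝ)) *ᵥ (xk - xbar) + (-Aᵀ) *ᵥ (lk - lbar)
      = -(Aᵀ *ᵥ lbar) - β • p := by
    rw [hpdef, hudef, smul_sub, smul_add, hβs, Matrix.smul_mulVec, Matrix.one_mulVec,
      Matrix.neg_mulVec, Matrix.mulVec_sub, Matrix.mulVec_sub, Matrix.mulVec_smul]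
    module
  rw [hx1]
  have hexp : q ⬝ᵥ (-(Aᵀ *ᵥ lbar) - β • p) = q ⬝ᵥ (-(Aᵀ *ᵥ lbar)) - β * (q ⬝ᵥ p) := by
    rw [dotProduct_sub, dotProduct_smul, smul_eq_mul]
  rw [hexp]
  linarith [key]
end

section
/- Let θ : ℝⁿ → ℝ be convex, X ⊆ ℝⁿ nonempty closed convex, A ∈ ℝ^{m×n}, b ∈ ℝᵐ, β > 0, δ > 0, α ∈ (0,2), and set M = (1/β)AAᵀ + δIₘ. Given wᵏ = (xᵏ, λᵏ), suppose λ̄ᵏ satisfies Axᵏ − b + M(λ̄ᵏ − λᵏ) = 0, x̄ᵏ ∈ argmin{θ(x) + (β/2)‖x − [xᵏ + (1/β)Aᵀ(2λ̄ᵏ − λᵏ)]‖² : x ∈ X}, and wᵏ⁺¹ = wᵏ − α(wᵏ − w̄ᵏ) with w̄ᵏ = (x̄ᵏ, λ̄ᵏ). Then for every w = (x,λ) ∈ X × ℝᵐ, α[θ(x) − θ(x̄ᵏ) + (w − w̄ᵏ)ᵀF(w)] ≥ (1/2)[‖w − wᵏ⁺¹‖²_H − ‖w − wᵏ‖²_H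 + α(2 − α)‖wᵏ − w̄ᵏ‖²_H]. -/
open Matrix Set

/-- Symmetric quadratic expansion for `(u + s•v)ᵀ H (u + s•v)`. -/
lemma quad_expand {k : Type*} [Fintype k] (H : Matrix k k ℝ)
    (hH : ∀ u v : k → ℝ, u ⬝ᵥ (H *ᵥ v) = v ⬝ᵥ (H *ᵥ u)) (u v : k → ℝ) (s : ℝ) :
    (u + s • v) ⬝ᵥ (H *ᵥ (u + s • v)) =
      u ⬝ᵥ (H *ᵥ u) + 2 * s * (u ⬝ᵥ (H *ᵥ v)) + s ^ 2 * (v ⬝ᵥ (H *ᵥ v)) := by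
  rw [mulVec_add, mulVec_smul]
  simp only [dotProduct_add, add_dotProduct, dotProduct_smul, smul_dotProduct, smul_eq_mul]
  rw [hH v u]; ring

/-- Block expansion of the `H`-quadratic form. -/
lemma quad_blocks {n m : ℕ} (A : Matrix (Fin m) (Fin n) ℝ) (M : Matrix (Fin m) (Fin m) ℝ)
    (β : ℝ) (a a' : Fin n → ℝ) (c c' : Fin m → ℝ) :
    Sum.elim a c ⬝ᵥ
      ((Matrix.fromBlocks (β • (1 : Matrix (Fin n) (Fin n) ℝ)) (-Aᵀ) (-A) M) *ᵥ
        Sum.elim a' c') =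
    β * (a ⬝ᵥ a') - a ⬝ᵥ (Aᵀ *ᵥ c') - c ⬝ᵥ (A *ᵥ a') + c ⬝ᵥ (M *ᵥ c') := by
  rw [fromBlocks_mulVec, sumElim_dotProduct_sumElim]
  simp only [Sum.elim_comp_inl, Sum.elim_comp_inr, neg_mulVec, smul_mulVec, one_mulVec,
    dotProduct_add, dotProduct_neg, dotProduct_smul, smul_eq_mul]
  ring

/-- First-order optimality (variational inequality) for the proximal minimization step. -/
lemma opt_vi {n : ℕ} {θ : (Fin n → ℝ) → ℝ} (hθ : ConvexOn ℝ Set.univ θ)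
    {X : Set (Fin n → ℝ)} (hXconv : Convex ℝ X) {β : ℝ} (hβ : 0 < β)
    {p xbar : Fin n → ℝ} (hxb : xbar ∈ X)
    (hmin : ∀ x ∈ X, θ xbar + (β / 2) * ((xbar - p) ⬝ᵥ (xbar - p)) ≤
      θ x + (β / 2) * ((x - p) ⬝ᵥ (x - p)))
    {x : Fin n → ℝ} (hx : x ∈ X) :
    β * ((x - xbar) ⬝ᵥ (p - xbar)) ≤ θ x - θ xbar := by
  set K := (x - xbar) ⬝ᵥ (x - xbar) with hK
  have hK0 : 0 ≤ K := by
    rw [hK]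
    exact Finset.sum_nonneg fun i _ => mul_self_nonneg _
  have hstep : ∀ t : ℝ, 0 < t → t ≤ 1 →
      β * ((x - xbar) ⬝ᵥ (p - xbar)) ≤ θ x - θ xbar + (β / 2) * t * K := by
    intro t ht0 ht1
    have hmem : xbar + t • (x - xbar) ∈ X :=
      hXconv.add_smul_sub_mem hxb hx ⟨ht0.le, ht1⟩
    have hconv : θ (xbar + t • (x - xbar)) ≤ θ xbar + t * (θ x - θ xbar) := by
      have h := hθ.2 (Set.mem_univ xbar) (Set.mem_univ x)
        (show (0:ℝ) ≤ 1 - t by linarith) ht0.le (by ring)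
      have heq : (1 - t) • xbar + t • x = xbar + t • (x - xbar) := by module
      rw [heq] at h
      simp only [smul_eq_mul] at h
      linarith
    have hquad : ((xbar + t • (x - xbar)) - p) ⬝ᵥ ((xbar + t • (x - xbar)) - p)
        = (xbar - p) ⬝ᵥ (xbar - p) - 2 * t * ((x - xbar) ⬝ᵥ (p - xbar)) + t ^ 2 * K := by
      have heq : (xbar + t • (x - xbar)) - p = (xbar - p) + t • (x - xbar) := by module
      have hcm : (xbar - p) ⬝ᵥ (x - xbar) = -((x - xbar) ⬝ᵥ (p - xbar)) := by
        rw [dotProduct_comm, show xbar - p = -(p - xbar) by module, dotProduct_neg]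
      rw [heq, hK]
      simp only [dotProduct_add, add_dotProduct, dotProduct_smul, smul_dotProduct, smul_eq_mul]
      rw [hcm, show (x - xbar) ⬝ᵥ (xbar - p) = -((x - xbar) ⬝ᵥ (p - xbar)) by
        rw [show xbar - p = -(p - xbar) by module, dotProduct_neg]]
      ring
    have h := hmin _ hmem
    rw [hquad] at h
    have key : t * (β * ((x - xbar) ⬝ᵥ (p - xbar)))
        ≤ t * (θ x - θ xbar + (β / 2) * t * K) := by nlinarith [h, hconv]
    exact le_of_mul_le_mul_left key ht0
  refine le_of_forall_pos_le_add fun ε hε => ?_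
  have hd : 0 < β * (K + 1) := by positivity
  set t := min 1 (2 * ε / (β * (K + 1))) with ht
  have htpos : 0 < t := lt_min one_pos (by positivity)
  have ht1 : t ≤ 1 := min_le_left _ _
  have h2 : t ≤ 2 * ε / (β * (K + 1)) := min_le_right _ _
  have h3 : t * (β * (K + 1)) ≤ 2 * ε := by
    rw [← le_div_iff₀ hd]; exact h2
  have h4 : (β / 2) * t * K ≤ ε := by
    nlinarith [mul_nonneg htpos.le hβ.le, hK0]
  have := hstep t htpos ht1
  linarith

/-- With the dual-primal balanced ALM prediction step and the correction
`wᵏ⁺¹ = wᵏ - α (wᵏ - w̄ᵏ)`, for every `w = (x,λ) ∈ X × ℝᵐ`,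
`α [θ x - θ x̄ᵏ + (w - w̄ᵏ)ᵀ F(w)] ≥
  (1/2)[‖w - wᵏ⁺¹‖²_H - ‖w - wᵏ‖²_H + α (2 - α) ‖wᵏ - w̄ᵏ‖²_H]`. -/
theorem stmt_8 {n m : ℕ} (θ : (Fin n → ℝ) → ℝ) (hθ : ConvexOn ℝ Set.univ θ)
    (X : Set (Fin n → ℝ)) (hXne : X.Nonempty) (hXclosed : IsClosed X) (hXconv : Convex ℝ X)
    (A : Matrix (Fin m) (Fin n) ℝ) (b : Fin m → ℝ) (β δ α : ℝ) (hβ : 0 < β) (hδ : 0 < δ)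
    (hα : α ∈ Set.Ioo (0 : ℝ) 2)
    (xk xbar : Fin n → ℝ) (lk lbar : Fin m → ℝ) (wk1 : Fin n ⊕ Fin m → ℝ)
    (hlbar : A *ᵥ xk - b +
      (((1 / β) • (A * Aᵀ) + δ • (1 : Matrix (Fin m) (Fin m) ℝ)) *ᵥ (lbar - lk)) = 0)
    (hxbar : xbar ∈ X ∧ ∀ x ∈ X,
      θ xbar + (β / 2) *
        ((xbar - (xk + (1 / β) • (Aᵀ *ᵥ ((2 : ℝ) • lbar - lk)))) ⬝ᵥ
         (xbar - (xk + (1 / β) • (Aᵀ *ᵥ ((2 : ℝ) • lbar - lk))))) ≤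
      θ x + (β / 2) *
        ((x - (xk + (1 / β) • (Aᵀ *ᵥ ((2 : ℝ) • lbar - lk)))) ⬝ᵥ
         (x - (xk + (1 / β) • (Aᵀ *ᵥ ((2 : ℝ) • lbar - lk))))))
    (hupd : wk1 = Sum.elim xk lk - α • (Sum.elim xk lk - Sum.elim xbar lbar)) :
    ∀ x ∈ X, ∀ lam : Fin m → ℝ,
      α * (θ x - θ xbar +
        Sum.elim (x - xbar) (lam - lbar) ⬝ᵥ Sum.elim (-(Aᵀ *ᵥ lam)) (A *ᵥ x - b)) ≥
      (1 / 2) *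
        ((Sum.elim x lam - wk1) ⬝ᵥ
            ((Matrix.fromBlocks (β • (1 : Matrix (Fin n) (Fin n) ℝ)) (-Aᵀ) (-A)
              ((1 / β) • (A * Aᵀ) + δ • (1 : Matrix (Fin m) (Fin m) ℝ))) *ᵥ
              (Sum.elim x lam - wk1)) -
         (Sum.elim x lam - Sum.elim xk lk) ⬝ᵥ
            ((Matrix.fromBlocks (β • (1 : Matrix (Fin n) (Fin n) ℝ)) (-Aᵀ) (-A)
              ((1 / β) • (A * Aᵀ) + δ • (1 : Matrix (Fin m) (Fin m) ℝ))) *ᵥ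
              (Sum.elim x lam - Sum.elim xk lk)) +
         α * (2 - α) *
           ((Sum.elim xk lk - Sum.elim xbar lbar) ⬝ᵥ
            ((Matrix.fromBlocks (β • (1 : Matrix (Fin n) (Fin n) ℝ)) (-Aᵀ) (-A)
              ((1 / β) • (A * Aᵀ) + δ • (1 : Matrix (Fin m) (Fin m) ℝ))) *ᵥ
              (Sum.elim xk lk - Sum.elim xbar lbar)))) := by
  obtain ⟨hxbX, hmin⟩ := hxbar
  obtain ⟨hα0, hα2⟩ := hα
  intro x hx lam
  set e := x - xbar with he
  set f := lam - lbar with hf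
  set dx := xk - xbar with hdx
  set dl := lk - lbar with hdl
  set u := Sum.elim e f with hu
  set d := Sum.elim dx dl with hd
  -- symmetry of H
  have hHt : (Matrix.fromBlocks (β • (1 : Matrix (Fin n) (Fin n) ℝ)) (-Aᵀ) (-A)
        ((1 / β) • (A * Aᵀ) + δ • (1 : Matrix (Fin m) (Fin m) ℝ)))ᵀ =
      Matrix.fromBlocks (β • (1 : Matrix (Fin n) (Fin n) ℝ)) (-Aᵀ) (-A)
        ((1 / β) • (A * Aᵀ) + δ • (1 : Matrix (Fin m) (Fin m) ℝ)) := by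
    simp [fromBlocks_transpose, transpose_add, transpose_smul, transpose_mul,
      Matrix.transpose_one, Matrix.transpose_neg]
  have hsymm : ∀ u v : Fin n ⊕ Fin m → ℝ,
      u ⬝ᵥ ((Matrix.fromBlocks (β • (1 : Matrix (Fin n) (Fin n) ℝ)) (-Aᵀ) (-A)
          ((1 / β) • (A * Aᵀ) + δ • (1 : Matrix (Fin m) (Fin m) ℝ))) *ᵥ v) =
      v ⬝ᵥ ((Matrix.fromBlocks (β • (1 : Matrix (Fin n) (Fin n) ℝ)) (-Aᵀ) (-A)
          ((1 / β) • (A * Aᵀ) + δ • (1 : Matrix (Fin m) (Fin m) ℝ))) *ᵥ u) := by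
    intro u v
    rw [dotProduct_mulVec, ← mulVec_transpose, hHt, dotProduct_comm]
  -- rewriting the three difference vectors
  have h3 : Sum.elim xk lk - Sum.elim xbar lbar = d := by
    funext i; cases i <;> simp [hd, hdx, hdl]
  have h1 : Sum.elim x lam - wk1 = u + (α - 1) • d := by
    rw [hupd, h3]
    funext i
    cases i <;>
      simp [hu, hd, he, hf, hdx, hdl, Sum.elim_inl, Sum.elim_inr, Pi.add_apply, Pi.sub_apply,
        Pi.smul_apply, smul_eq_mul] <;> ring
  have h2 : Sum.elim x lam - Sum.elim xk lk = u + (-1 : ℝ) • d := by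
    funext i
    cases i <;>
      simp [hu, hd, he, hf, hdx, hdl, Sum.elim_inl, Sum.elim_inr, Pi.add_apply, Pi.sub_apply,
        Pi.smul_apply, smul_eq_mul] <;> ring
  rw [h1, h2, h3, quad_expand _ hsymm u d (α - 1), quad_expand _ hsymm u d (-1)]
  -- key inequality : u ⬝ᵥ H d ≤ θ x - θ xbar + (w - w̄)ᵀ F(w)
  have key : u ⬝ᵥ ((Matrix.fromBlocks (β • (1 : Matrix (Fin n) (Fin n) ℝ)) (-Aᵀ) (-A)
        ((1 / β) • (A * Aᵀ) + δ • (1 : Matrix (Fin m) (Fin m) ℝ))) *ᵥ d) ≤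
      θ x - θ xbar + u ⬝ᵥ Sum.elim (-(Aᵀ *ᵥ lam)) (A *ᵥ x - b) := by
    rw [hu, hd, quad_blocks, sumElim_dotProduct_sumElim]
    have hMdl : ((1 / β) • (A * Aᵀ) + δ • (1 : Matrix (Fin m) (Fin m) ℝ)) *ᵥ dl
        = A *ᵥ xk - b := by
      have h0 : lbar - lk = -dl := by rw [hdl, neg_sub]
      rw [h0, mulVec_neg, ← sub_eq_add_neg, sub_eq_zero] at hlbar
      exact hlbar.symm
    have hopt := opt_vi hθ hXconv hβ hxbX hmin hx
    have hAc : ∀ (v : Fin n → ℝ) (c : Fin m → ℝ), c ⬝ᵥ (A *ᵥ v) = v ⬝ᵥ (Aᵀ *ᵥ c) := by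
      intro v c
      rw [dotProduct_mulVec, ← mulVec_transpose, dotProduct_comm]
    have hid : β * ((x - xbar) ⬝ᵥ ((xk + (1 / β) • (Aᵀ *ᵥ ((2 : ℝ) • lbar - lk))) - xbar)) =
        β * (e ⬝ᵥ dx) - e ⬝ᵥ (Aᵀ *ᵥ dl) - f ⬝ᵥ (A *ᵥ dx) + (f ⬝ᵥ (A *ᵥ xk) - f ⬝ᵥ b)
        - (e ⬝ᵥ (-(Aᵀ *ᵥ lam)) + f ⬝ᵥ (A *ᵥ x - b)) := by
      rw [he, hf, hdx, hdl]
      simp only [dotProduct_sub, dotProduct_add, dotProduct_neg, hAc, mulVec_sub, mulVec_add,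
        mulVec_smul, sub_dotProduct, add_dotProduct, neg_dotProduct, dotProduct_smul,
        smul_dotProduct, smul_eq_mul]
      field_simp
      ring
    rw [hMdl]
    have hfb : f ⬝ᵥ (A *ᵥ xk - b) = f ⬝ᵥ (A *ᵥ xk) - f ⬝ᵥ b := dotProduct_sub _ _ _
    linarith [hopt, hid, hfb]
  nlinarith [mul_nonneg hα0.le (sub_nonneg.mpr key)]
end

section
/- Let θ : ℝⁿ → ℝ be convex, X ⊆ ℝⁿ nonempty closed convex, A ∈ ℝ^{m×n}, b ∈ ℝᵐ, β > 0, δ > 0, α ∈ (0,2), and set M = (1/β)AAᵀ + δIₘ. Given wᵏ = (xᵏ, λᵏ), suppose λ̄ᵏ satisfies Axᵏ − b + M(λ̄ᵏ − λᵏ) = 0, x̄ᵏ ∈ argmin{θ(x) + (β/2)‖x − [xᵏ + (1/β)Aᵀ(2λ̄ᵏ − λᵏ)]‖² : x ∈ X}, and wᵏ⁺¹ = wᵏ − α(wᵏ − w̄ᵏ) with w̄ᵏ = (x̄ᵏ, λ̄ᵏ). Then for every w* ∈ Ω*, ‖wᵏ⁺¹ − w*‖²_H ≤ ‖wᵏ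 − w*‖²_H − α(2 − α)‖wᵏ − w̄ᵏ‖²_H. -/
open Matrix Set

/-- Strict contraction of the dual-primal balanced ALM: under the prediction
and correction steps, for every solution `w* ∈ Ω*` of the variational inequality,
`‖wᵏ⁺¹ - w*‖²_H ≤ ‖wᵏ - w*‖²_H - α (2 - α) ‖wᵏ - w̄ᵏ‖²_H`. -/
theorem stmt_9 {n m : ℕ} (θ : (Fin n → ℝ) → ℝ) (hθ : ConvexOn ℝ Set.univ θ)
    (X : Set (Fin n → ℝ)) (hXne : X.Nonempty) (hXclosed : IsClosed X) (hXconv : Convex ℝ X)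
    (A : Matrix (Fin m) (Fin n) ℝ) (b : Fin m → ℝ) (β δ α : ℝ) (hβ : 0 < β) (hδ : 0 < δ)
    (hα : α ∈ Set.Ioo (0 : ℝ) 2)
    (xk xbar : Fin n → ℝ) (lk lbar : Fin m → ℝ) (wk1 : Fin n ⊕ Fin m → ℝ)
    (hlbar : A *ᵥ xk - b +
      (((1 / β) • (A * Aᵀ) + δ • (1 : Matrix (Fin m) (Fin m) ℝ)) *ᵥ (lbar - lk)) = 0)
    (hxbar : xbar ∈ X ∧ ∀ x ∈ X,
      θ xbar + (β / 2) *
        ((xbar - (xk + (1 / β) • (Aᵀ *ᵥ ((2 : ℝ) • lbar - lk)))) ⬝ᵥ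
         (xbar - (xk + (1 / β) • (Aᵀ *ᵥ ((2 : ℝ) • lbar - lk))))) ≤
      θ x + (β / 2) *
        ((x - (xk + (1 / β) • (Aᵀ *ᵥ ((2 : ℝ) • lbar - lk)))) ⬝ᵥ
         (x - (xk + (1 / β) • (Aᵀ *ᵥ ((2 : ℝ) • lbar - lk))))))
    (hupd : wk1 = Sum.elim xk lk - α • (Sum.elim xk lk - Sum.elim xbar lbar))
    (xstar : Fin n → ℝ) (lstar : Fin m → ℝ)
    (hsol : xstar ∈ X ∧ ∀ x ∈ X, ∀ lam : Fin m → ℝ,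
      θ x - θ xstar +
        Sum.elim (x - xstar) (lam - lstar) ⬝ᵥ Sum.elim (-(Aᵀ *ᵥ lstar)) (A *ᵥ xstar - b) ≥ 0) :
    (wk1 - Sum.elim xstar lstar) ⬝ᵥ
        ((Matrix.fromBlocks (β • (1 : Matrix (Fin n) (Fin n) ℝ)) (-Aᵀ) (-A)
          ((1 / β) • (A * Aᵀ) + δ • (1 : Matrix (Fin m) (Fin m) ℝ))) *ᵥ
          (wk1 - Sum.elim xstar lstar)) ≤
    (Sum.elim xk lk - Sum.elim xstar lstar) ⬝ᵥ
        ((Matrix.fromBlocks (β • (1 : Matrix (Fin n) (Fin n) ℝ)) (-Aᵀ) (-A)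
          ((1 / β) • (A * Aᵀ) + δ • (1 : Matrix (Fin m) (Fin m) ℝ))) *ᵥ
          (Sum.elim xk lk - Sum.elim xstar lstar)) -
      α * (2 - α) *
        ((Sum.elim xk lk - Sum.elim xbar lbar) ⬝ᵥ
          ((Matrix.fromBlocks (β • (1 : Matrix (Fin n) (Fin n) ℝ)) (-Aᵀ) (-A)
            ((1 / β) • (A * Aᵀ) + δ • (1 : Matrix (Fin m) (Fin m) ℝ))) *ᵥ
            (Sum.elim xk lk - Sum.elim xbar lbar))) := by
  obtain ⟨hα0, hα2⟩ := hα
  set M : Matrix (Fin m) (Fin m) ℝ :=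
    (1 / β) • (A * Aᵀ) + δ • (1 : Matrix (Fin m) (Fin m) ℝ) with hMdef
  set H : Matrix (Fin n ⊕ Fin m) (Fin n ⊕ Fin m) ℝ :=
    Matrix.fromBlocks (β • (1 : Matrix (Fin n) (Fin n) ℝ)) (-Aᵀ) (-A) M with hHdef
  -- symmetry of H
  have hHsymm : Hᵀ = H := by
    rw [hHdef, Matrix.fromBlocks_transpose]
    congr 1 <;> simp [hMdef, Matrix.transpose_add, Matrix.transpose_smul, Matrix.transpose_mul]
  have hsym : ∀ u v : Fin n ⊕ Fin m → ℝ, u ⬝ᵥ (H *ᵥ v) = v ⬝ᵥ (H *ᵥ u) := by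
    intro u v
    rw [Matrix.dotProduct_mulVec, ← Matrix.mulVec_transpose, hHsymm, dotProduct_comm]
  -- transpose flip for dot products
  have hT : ∀ (u : Fin n → ℝ) (v : Fin m → ℝ), u ⬝ᵥ (Aᵀ *ᵥ v) = v ⬝ᵥ (A *ᵥ u) := by
    intro u v
    rw [Matrix.dotProduct_mulVec, ← Matrix.mulVec_transpose, Matrix.transpose_transpose,
      dotProduct_comm]
  have hT2 : ∀ (u : Fin n → ℝ) (v : Fin m → ℝ), (Aᵀ *ᵥ v) ⬝ᵥ u = v ⬝ᵥ (A *ᵥ u) := by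
    intro u v; rw [dotProduct_comm, hT]
  have hsub : ∀ (a c : Fin n → ℝ) (b d : Fin m → ℝ),
      Sum.elim a b - Sum.elim c d = Sum.elim (a - c) (b - d) := by
    intro a c b d; funext w; cases w <;> simp
  -- the proximal point
  set p : Fin n → ℝ := xk + (1 / β) • (Aᵀ *ᵥ ((2 : ℝ) • lbar - lk)) with hpdef
  have hdotself : ∀ v : Fin n → ℝ, 0 ≤ v ⬝ᵥ v := fun v =>
    Finset.sum_nonneg fun i _ => mul_self_nonneg _
  -- first-order optimality condition for the proximal step
  have hfoc : ∀ x ∈ X, 0 ≤ θ x - θ xbar + β * ((xbar - p) ⬝ᵥ (x - xbar)) := by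
    intro x hx
    set c : ℝ := θ x - θ xbar + β * ((xbar - p) ⬝ᵥ (x - xbar)) with hcdef
    set d : ℝ := (β / 2) * ((x - xbar) ⬝ᵥ (x - xbar)) with hddef
    have hd : 0 ≤ d := mul_nonneg (by linarith) (hdotself _)
    have hquad : ∀ t : ℝ, 0 < t → t ≤ 1 → 0 ≤ t * c + t ^ 2 * d := by
      intro t ht0 ht1
      have hxt : (1 - t) • xbar + t • x ∈ X :=
        hXconv hxbar.1 hx (by linarith) ht0.le (by ring)
      have h1 := hxbar.2 _ hxt
      have h2 := hθ.2 (Set.mem_univ xbar) (Set.mem_univ x) (by linarith : (0:ℝ) ≤ 1 - t)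
        ht0.le (by ring)
      have hvec : (1 - t) • xbar + t • x - p = (xbar - p) + t • (x - xbar) := by
        module
      rw [hvec] at h1
      have hdot : ((xbar - p) + t • (x - xbar)) ⬝ᵥ ((xbar - p) + t • (x - xbar)) =
          (xbar - p) ⬝ᵥ (xbar - p) + 2 * t * ((xbar - p) ⬝ᵥ (x - xbar)) +
            t ^ 2 * ((x - xbar) ⬝ᵥ (x - xbar)) := by
        simp only [dotProduct_add, add_dotProduct, dotProduct_smul,
          smul_dotProduct, smul_eq_mul,
          dotProduct_comm (t • (x - xbar)) (xbar - p)]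
        ring
      rw [hdot] at h1
      simp only [smul_eq_mul] at h2
      rw [hcdef, hddef]
      nlinarith [h1, h2]
    by_contra hc
    push_neg at hc
    set t : ℝ := min 1 (-c / (2 * (d + 1))) with htdef
    have hd1 : (0:ℝ) < d + 1 := by linarith
    have ht0 : 0 < t := lt_min one_pos (div_pos (by linarith) (by linarith))
    have ht1 : t ≤ 1 := min_le_left _ _
    have ht2 : t ≤ -c / (2 * (d + 1)) := min_le_right _ _
    have h := hquad t ht0 ht1
    have h3 : t * (2 * (d + 1)) ≤ -c := (le_div_iff₀ (by linarith)).mp ht2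
    have h3' : t * (d + 1) ≤ -c / 2 := by linarith
    have e1 : t ^ 2 * d ≤ t * (t * (d + 1)) := by nlinarith [mul_pos ht0 ht0]
    have e2 : t * (t * (d + 1)) ≤ t * (-c / 2) := mul_le_mul_of_nonneg_left h3' ht0.le
    nlinarith [mul_pos ht0 (neg_pos.mpr hc)]
  -- rewrite the proximal optimality in linear form
  have hβinv : ∀ v : Fin n → ℝ, β • ((1 / β) • v) = v := by
    intro v; rw [smul_smul, mul_one_div, div_self hβ.ne', one_smul]
  have hfoc' : 0 ≤ θ xstar - θ xbar +
      (β • xbar - β • xk - Aᵀ *ᵥ ((2 : ℝ) • lbar - lk)) ⬝ᵥ (xstar - xbar) := by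
    have h := hfoc xstar hsol.1
    have hps : β • (xbar - p) = β • xbar - β • xk - Aᵀ *ᵥ ((2 : ℝ) • lbar - lk) := by
      rw [hpdef, smul_sub, smul_add, hβinv]; abel
    calc (0:ℝ) ≤ θ xstar - θ xbar + β * ((xbar - p) ⬝ᵥ (xstar - xbar)) := h
      _ = θ xstar - θ xbar +
          (β • xbar - β • xk - Aᵀ *ᵥ ((2 : ℝ) • lbar - lk)) ⬝ᵥ (xstar - xbar) := by
        rw [← hps, smul_dotProduct]; simp
  -- variational inequality at wbar
  have hvi := hsol.2 xbar hxbar.1 lbar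
  rw [sumElim_dotProduct_sumElim] at hvi
  -- consequence of the lambda-prediction step
  have hM : M *ᵥ (lk - lbar) = A *ᵥ xk - b := by
    have h2 : M *ᵥ (lbar - lk) = -(A *ᵥ xk - b) := by
      rwa [add_comm, add_eq_zero_iff_eq_neg] at hlbar
    calc M *ᵥ (lk - lbar) = M *ᵥ (-(lbar - lk)) := by rw [neg_sub]
      _ = -(M *ᵥ (lbar - lk)) := by rw [Matrix.mulVec_neg]
      _ = A *ᵥ xk - b := by rw [h2, neg_neg]
  -- the key nonnegativity: (wbar - wstar)ᵀ H (wk - wbar) ≥ 0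
  have hkey : 0 ≤ (Sum.elim xbar lbar - Sum.elim xstar lstar) ⬝ᵥ
      (H *ᵥ (Sum.elim xk lk - Sum.elim xbar lbar)) := by
    rw [hsub, hsub, hHdef, Matrix.fromBlocks_mulVec, sumElim_dotProduct_sumElim]
    simp only [Sum.elim_comp_inl, Sum.elim_comp_inr]
    rw [hM]
    have hE : (xbar - xstar) ⬝ᵥ
          ((β • (1 : Matrix (Fin n) (Fin n) ℝ)) *ᵥ (xk - xbar) + (-Aᵀ) *ᵥ (lk - lbar)) +
        (lbar - lstar) ⬝ᵥ ((-A) *ᵥ (xk - xbar) + (A *ᵥ xk - b)) =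
        (θ xstar - θ xbar +
          (β • xbar - β • xk - Aᵀ *ᵥ ((2 : ℝ) • lbar - lk)) ⬝ᵥ (xstar - xbar)) +
        (θ xbar - θ xstar +
          ((xbar - xstar) ⬝ᵥ (-(Aᵀ *ᵥ lstar)) + (lbar - lstar) ⬝ᵥ (A *ᵥ xstar - b))) := by
      simp only [Matrix.smul_mulVec, Matrix.one_mulVec, Matrix.neg_mulVec,
        Matrix.mulVec_sub, Matrix.mulVec_smul, dotProduct_add, add_dotProduct,
        dotProduct_sub, sub_dotProduct, dotProduct_neg,
        neg_dotProduct, dotProduct_smul, smul_dotProduct, smul_eq_mul,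
        hT, hT2]
      ring_nf
      simp only [dotProduct_comm xbar xk, dotProduct_comm xbar xstar,
        dotProduct_comm xk xstar, dotProduct_comm lbar lk,
        dotProduct_comm lbar lstar, dotProduct_comm lk lstar]
      ring
    rw [hE]
    linarith [hfoc', hvi]
  -- now the quadratic expansion
  set wS : Fin n ⊕ Fin m → ℝ := Sum.elim xstar lstar
  set wK : Fin n ⊕ Fin m → ℝ := Sum.elim xk lk
  set wB : Fin n ⊕ Fin m → ℝ := Sum.elim xbar lbar
  set a : Fin n ⊕ Fin m → ℝ := wK - wS with hadef
  set g : Fin n ⊕ Fin m → ℝ := wK - wB with hgdef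
  have hw : wk1 - wS = a - α • g := by rw [hupd, hadef, hgdef]; abel
  have hcore : g ⬝ᵥ (H *ᵥ g) ≤ a ⬝ᵥ (H *ᵥ g) := by
    have hag : a = g + (wB - wS) := by rw [hadef, hgdef]; abel
    rw [hag, add_dotProduct]
    have : wB - wS = Sum.elim xbar lbar - Sum.elim xstar lstar := rfl
    linarith [hkey]
  have hexp : (a - α • g) ⬝ᵥ (H *ᵥ (a - α • g)) =
      a ⬝ᵥ (H *ᵥ a) - 2 * α * (a ⬝ᵥ (H *ᵥ g)) + α ^ 2 * (g ⬝ᵥ (H *ᵥ g)) := by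
    rw [Matrix.mulVec_sub, Matrix.mulVec_smul]
    simp only [dotProduct_sub, sub_dotProduct, dotProduct_smul,
      smul_dotProduct, smul_eq_mul, hsym g a]
    ring
  rw [hw, hexp]
  have h2 : 2 * α * (g ⬝ᵥ (H *ᵥ g)) ≤ 2 * α * (a ⬝ᵥ (H *ᵥ g)) := by
    apply mul_le_mul_of_nonneg_left hcore; linarith
  have h3 : α * (2 - α) * (g ⬝ᵥ (H *ᵥ g)) =
      2 * α * (g ⬝ᵥ (H *ᵥ g)) - α ^ 2 * (g ⬝ᵥ (H *ᵥ g)) := by ring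
  linarith
end

section
/- Let θ : ℝⁿ → ℝ be convex and continuous, X ⊆ ℝⁿ nonempty closed convex, A ∈ ℝ^{m×n}, b ∈ ℝᵐ, and let H ∈ ℝ^{(n+m)×(n+m)}. Let {wᵏ} and {w̄ᵏ} = {(x̄ᵏ, λ̄ᵏ)} be sequences with w̄ᵏ ∈ X × ℝᵐ such that for every k and every w = (x,λ) ∈ X × ℝᵐ, θ(x) − θ(x̄ᵏ) + (w − w̄ᵏ)ᵀF(w̄ᵏ) ≥ (w − w̄ᵏ)ᵀH(wᵏ − w̄ᵏ), and suppose wᵏ − w̄ᵏ → 0. If a subsequence {w̄^{k_j}} converges to w^∞, then w^∞ ∈ X × ℝᵐ and θ(x) − θ(x^∞) + (w − w^∞)ᵀF(w^∞) ≥ 0 for all w ∈ X × ℝᵐ, i.e. w^∞ ∈ Ω*. -/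
/-!
The prediction inequality is a continuous inequality in the pair `(w̄ᵏ, wᵏ - w̄ᵏ)`, so it persists
in the limit along the subsequence; there `wᵏ - w̄ᵏ → 0` kills the `H`-term on the right, leaving
the variational inequality that characterises `Ω*`. Membership `x^∞ ∈ X` is closedness of `X`.
-/

open Matrix Filter Topology

/-- The operator `F` of the paper, with `w = (x, λ)` encoded as a function on `ι ⊕ κ`. -/
def kktOperator {ι κ : Type*} [Fintype ι] [Fintype κ] (A : Matrix κ ι ℝ) (b : κ → ℝ)
    (u : ι ⊕ κ → ℝ) : ι ⊕ κ → ℝ :=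
  Sum.elim (-(Aᵀ *ᵥ (u ∘ Sum.inr))) (A *ᵥ (u ∘ Sum.inl) - b)

theorem continuous_kktOperator {ι κ : Type*} [Fintype ι] [Fintype κ] (A : Matrix κ ι ℝ)
    (b : κ → ℝ) : Continuous (kktOperator A b) :=
  have hinl : Continuous fun u : ι ⊕ κ → ℝ => u ∘ Sum.inl := by fun_prop
  have hinr : Continuous fun u : ι ⊕ κ → ℝ => u ∘ Sum.inr := by fun_prop
  Homeomorph.sumArrowHomeomorphProdArrow.symm.continuous.comp <|
    (continuous_const.matrix_mulVec hinr).neg.prodMk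
      ((continuous_const.matrix_mulVec hinl).sub continuous_const)

theorem nonneg_of_tendsto_of_dotProduct_mulVec_le {α ι : Type*} [Fintype ι] {l : Filter α}
    [l.NeBot] {g : (ι → ℝ) → ℝ} {F : (ι → ℝ) → ι → ℝ} (hg : Continuous g) (hF : Continuous F)
    (H : Matrix ι ι ℝ) (v : ι → ℝ) {u d : α → ι → ℝ} {u₀ : ι → ℝ}
    (hu : Tendsto u l (𝓝 u₀)) (hd : Tendsto d l (𝓝 0))
    (h : ∀ᶠ j in l, (v - u j) ⬝ᵥ (H *ᵥ d j) ≤ g (u j) + (v - u j) ⬝ᵥ F (u j)) :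
    0 ≤ g u₀ + (v - u₀) ⬝ᵥ F u₀ := by
  have hcont : Continuous fun p : (ι → ℝ) × (ι → ℝ) => (v - p.1) ⬝ᵥ (H *ᵥ p.2) :=
    (continuous_const.sub continuous_fst).dotProduct
      (continuous_const.matrix_mulVec continuous_snd)
  have hlhs : Tendsto (fun j => (v - u j) ⬝ᵥ (H *ᵥ d j)) l (𝓝 0) := by
    simpa only [mulVec_zero, dotProduct_zero, Function.comp_def] using
      (hcont.tendsto (u₀, 0)).comp (hu.prodMk_nhds hd)
  have hrhs : Tendsto (fun j => g (u j) + (v - u j) ⬝ᵥ F (u j)) l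
      (𝓝 (g u₀ + (v - u₀) ⬝ᵥ F u₀)) :=
    (hg.add ((continuous_const.sub continuous_id).dotProduct hF)).tendsto u₀ |>.comp hu
  exact le_of_tendsto_of_tendsto hlhs hrhs h

theorem stmt_11_general {n m : ℕ} (θ : (Fin n → ℝ) → ℝ)
    (hθc : Continuous θ)
    (X : Set (Fin n → ℝ)) (hXclosed : IsClosed X)
    (A : Matrix (Fin m) (Fin n) ℝ) (b : Fin m → ℝ)
    (H : Matrix (Fin n ⊕ Fin m) (Fin n ⊕ Fin m) ℝ)
    (w : ℕ → Fin n ⊕ Fin m → ℝ) (xbar : ℕ → Fin n → ℝ) (lbar : ℕ → Fin m → ℝ)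
    (hbarX : ∀ k, xbar k ∈ X)
    (hpred : ∀ k : ℕ, ∀ x ∈ X, ∀ lam : Fin m → ℝ,
      θ x - θ (xbar k) +
          Sum.elim (x - xbar k) (lam - lbar k) ⬝ᵥ
            Sum.elim (-(Aᵀ *ᵥ lbar k)) (A *ᵥ xbar k - b) ≥
        Sum.elim (x - xbar k) (lam - lbar k) ⬝ᵥ (H *ᵥ (w k - Sum.elim (xbar k) (lbar k))))
    (hdiff : Tendsto (fun k => w k - Sum.elim (xbar k) (lbar k)) atTop (nhds 0))
    (winf : Fin n ⊕ Fin m → ℝ) (φ : ℕ → ℕ) (hφ : StrictMono φ)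
    (hsub : Tendsto (fun j => Sum.elim (xbar (φ j)) (lbar (φ j))) atTop (nhds winf)) :
    (winf ∘ Sum.inl) ∈ X ∧
      ∀ x ∈ X, ∀ lam : Fin m → ℝ,
        θ x - θ (winf ∘ Sum.inl) +
          Sum.elim (x - winf ∘ Sum.inl) (lam - winf ∘ Sum.inr) ⬝ᵥ
            Sum.elim (-(Aᵀ *ᵥ (winf ∘ Sum.inr))) (A *ᵥ (winf ∘ Sum.inl) - b) ≥ 0 := by
  have hx : Tendsto (fun j => xbar (φ j)) atTop (𝓝 (winf ∘ Sum.inl)) := by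
    simpa [Function.comp_def] using
      ((by fun_prop : Continuous fun u : Fin n ⊕ Fin m → ℝ => u ∘ Sum.inl).tendsto winf).comp hsub
  refine ⟨hXclosed.mem_of_tendsto hx (.of_forall fun j => hbarX (φ j)), fun x hxX lam => ?_⟩
  have key := nonneg_of_tendsto_of_dotProduct_mulVec_le
    (g := fun u => θ x - θ (u ∘ Sum.inl)) (by fun_prop) (continuous_kktOperator A b) H
    (Sum.elim x lam) hsub (hdiff.comp hφ.tendsto_atTop)
    (.of_forall fun j => by
      simpa only [kktOperator, Sum.elim_comp_inl, Sum.elim_comp_inr, Sum.elim_sub_sub,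
        Function.comp_apply, ge_iff_le]
        using hpred (φ j) x hxX lam)
  rw [ge_iff_le, Sum.elim_sub_sub, Sum.elim_comp_inl_inr]
  exact key

/-- If the prediction inequality
`θ x - θ x̄ᵏ + (w - w̄ᵏ)ᵀ F(w̄ᵏ) ≥ (w - w̄ᵏ)ᵀ H (wᵏ - w̄ᵏ)` holds for all `k` and all
`w ∈ X × ℝᵐ`, `wᵏ - w̄ᵏ → 0`, and a subsequence `w̄^{k_j} → w^∞`, then `w^∞ ∈ X × ℝᵐ` and
`θ x - θ x^∞ + (w - w^∞)ᵀ F(w^∞) ≥ 0` for all `w ∈ X × ℝᵐ`, i.e. `w^∞ ∈ Ω*`. -/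
theorem stmt_11 {n m : ℕ} (θ : (Fin n → ℝ) → ℝ) (hθ : ConvexOn ℝ Set.univ θ)
    (hθc : Continuous θ)
    (X : Set (Fin n → ℝ)) (hXne : X.Nonempty) (hXclosed : IsClosed X) (hXconv : Convex ℝ X)
    (A : Matrix (Fin m) (Fin n) ℝ) (b : Fin m → ℝ)
    (H : Matrix (Fin n ⊕ Fin m) (Fin n ⊕ Fin m) ℝ)
    (w : ℕ → Fin n ⊕ Fin m → ℝ) (xbar : ℕ → Fin n → ℝ) (lbar : ℕ → Fin m → ℝ)
    (hbarX : ∀ k, xbar k ∈ X)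
    (hpred : ∀ k : ℕ, ∀ x ∈ X, ∀ lam : Fin m → ℝ,
      θ x - θ (xbar k) +
          Sum.elim (x - xbar k) (lam - lbar k) ⬝ᵥ
            Sum.elim (-(Aᵀ *ᵥ lbar k)) (A *ᵥ xbar k - b) ≥
        Sum.elim (x - xbar k) (lam - lbar k) ⬝ᵥ (H *ᵥ (w k - Sum.elim (xbar k) (lbar k))))
    (hdiff : Tendsto (fun k => w k - Sum.elim (xbar k) (lbar k)) atTop (nhds 0))
    (winf : Fin n ⊕ Fin m → ℝ) (φ : ℕ → ℕ) (hφ : StrictMono φ)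
    (hsub : Tendsto (fun j => Sum.elim (xbar (φ j)) (lbar (φ j))) atTop (nhds winf)) :
    (winf ∘ Sum.inl) ∈ X ∧
      ∀ x ∈ X, ∀ lam : Fin m → ℝ,
        θ x - θ (winf ∘ Sum.inl) +
          Sum.elim (x - winf ∘ Sum.inl) (lam - winf ∘ Sum.inr) ⬝ᵥ
            Sum.elim (-(Aᵀ *ᵥ (winf ∘ Sum.inr))) (A *ᵥ (winf ∘ Sum.inl) - b) ≥ 0 :=
  stmt_11_general θ hθc X hXclosed A b H w xbar lbar hbarX hpred hdiff winf φ hφ hsub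
end

section
/- Let θ : ℝⁿ → ℝ be convex and continuous, X ⊆ ℝⁿ nonempty closed convex, A ∈ ℝ^{m×n}, b ∈ ℝᵐ, β > 0, δ > 0, α ∈ (0,2), set M = (1/β)AAᵀ + δIₘ, and suppose Ω* is nonempty. Let {wᵏ} = {(xᵏ, λᵏ)} and {w̄ᵏ} = {(x̄ᵏ, λ̄ᵏ)} be generated from any w⁰ ∈ X × ℝᵐ by the scheme: λ̄ᵏ satisfies Axᵏ − b + M(λ̄ᵏ − λᵏ) = 0, x̄ᵏ ∈ argmin{θ(x) + (β/2)‖x − [xᵏ + (1/β)Aᵀ(2λ̄ᵏ − λᵏ)]‖² : x ∈ X}, and wᵏ⁺¹ = wᵏ − α(wᵏ − w̄ᵏ). Then {wᵏ} converges to some w^∞ ∈ Ω*. -/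
open Matrix Set Filter Topology

/-!
The predictor `w̄ᵏ` satisfies, by first-order optimality of the primal subproblem and the dual
equation, `θ(x) - θ(x̄ᵏ) + (w - w̄ᵏ)ᵀF(w̄ᵏ) ≥ (w - w̄ᵏ)ᵀH(wᵏ - w̄ᵏ)` for all `w ∈ Ω`, with
`H = [[β I, -Aᵀ], [-A, M]]`; `H` is positive definite because `M - AAᵀ/β = δI`. Testing with a
solution `w*` and using that `F` is monotone (its linear part is skew) gives
`(wᵏ - w*)ᵀH(wᵏ - w̄ᵏ) ≥ ‖wᵏ - w̄ᵏ‖²_H`, hence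
`‖wᵏ⁺¹ - w*‖²_H ≤ ‖wᵏ - w*‖²_H - α(2 - α)‖wᵏ - w̄ᵏ‖²_H`. So the iterates are bounded and
`wᵏ - w̄ᵏ → 0`; every cluster point then solves the variational inequality, and the
`H`-distance to that cluster point, being nonincreasing, tends to `0`.
-/

theorem dotProduct_self_nonneg {o R : Type*} [Fintype o] [Ring R] [LinearOrder R]
    [IsStrictOrderedRing R] (u : o → R) : 0 ≤ u ⬝ᵥ u :=
  Fintype.sum_nonneg fun i => mul_self_nonneg (u i)

theorem dotProduct_self_pos {o R : Type*} [Fintype o] [Ring R] [LinearOrder R]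
    [IsStrictOrderedRing R] {u : o → R} (hu : u ≠ 0) : 0 < u ⬝ᵥ u :=
  (dotProduct_self_nonneg u).lt_of_ne' (dotProduct_self_eq_zero.not.2 hu)

theorem dotProduct_mulVec_eq_transpose {ι κ R : Type*} [Fintype ι] [Fintype κ] [CommSemiring R]
    (A : Matrix κ ι R) (u : ι → R) (v : κ → R) : v ⬝ᵥ (A *ᵥ u) = u ⬝ᵥ (Aᵀ *ᵥ v) := by
  rw [dotProduct_mulVec, ← mulVec_transpose, dotProduct_comm]

section Fejer

variable {E : Type*} [SeminormedAddCommGroup E]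

theorem norm_le_sqrt_of_coercive {N : E → ℝ} {c : ℝ} (hc : 0 < c)
    (hN : ∀ v, c * ‖v‖ ^ 2 ≤ N v) (v : E) : ‖v‖ ≤ √(N v / c) := by
  rw [Real.le_sqrt (norm_nonneg _) (div_nonneg ((mul_nonneg hc.le (sq_nonneg _)).trans (hN v))
    hc.le), le_div_iff₀ hc, mul_comm]
  exact hN v

theorem tendsto_zero_of_coercive {α : Type*} {l : Filter α} {N : E → ℝ} {c : ℝ} (hc : 0 < c)
    (hN : ∀ v, c * ‖v‖ ^ 2 ≤ N v) {v : α → E} (h : Tendsto (fun a => N (v a)) l (𝓝 0)) :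
    Tendsto v l (𝓝 0) := by
  have hsqrt : Tendsto (fun a => √(N (v a) / c)) l (𝓝 0) := by
    simpa using ((h.div_const c).sqrt)
  exact squeeze_zero_norm (fun a => norm_le_sqrt_of_coercive hc hN (v a)) hsqrt

theorem exists_tendsto_of_fejer [ProperSpace E] {N : E → ℝ} (hNc : Continuous N) (hN0 : N 0 = 0)
    {c : ℝ} (hc : 0 < c) (hN : ∀ v, c * ‖v‖ ^ 2 ≤ N v) {S : Set E} (hS : S.Nonempty) {w : ℕ → E}
    (hfejer : ∀ s ∈ S, Antitone fun k => N (w k - s))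
    (hclust : ∀ (φ : ℕ → ℕ) (p : E), StrictMono φ → Tendsto (w ∘ φ) atTop (𝓝 p) → p ∈ S) :
    ∃ p ∈ S, Tendsto w atTop (𝓝 p) := by
  obtain ⟨s, hs⟩ := hS
  have hbdd : ∀ k, w k ∈ Metric.closedBall s √(N (w 0 - s) / c) := fun k => by
    rw [Metric.mem_closedBall, dist_eq_norm]
    refine (norm_le_sqrt_of_coercive hc hN _).trans (Real.sqrt_le_sqrt ?_)
    exact div_le_div_of_nonneg_right (hfejer s hs (Nat.zero_le k)) hc.le
  obtain ⟨p, -, φ, hφ, hwφ⟩ := tendsto_subseq_of_bounded Metric.isBounded_closedBall hbdd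
  have hp := hclust φ p hφ hwφ
  have hNφ : Tendsto (fun j => N (w (φ j) - p)) atTop (𝓝 0) := by
    rw [← hN0]
    exact (hNc.tendsto 0).comp (by simpa using hwφ.sub_const p)
  have hNw : Tendsto (fun k => N (w k - p)) atTop (𝓝 0) :=
    (tendsto_iff_tendsto_subseq_of_antitone (hfejer p hp) hφ.tendsto_atTop).2 hNφ
  exact ⟨p, hp, by simpa using (tendsto_zero_of_coercive hc hN hNw).add_const p⟩

end Fejer

theorem tendsto_zero_of_le_sub_mul {a s : ℕ → ℝ} {γ : ℝ} (hγ : 0 < γ) (ha : ∀ k, 0 ≤ a k)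
    (hs : ∀ k, 0 ≤ s k) (hdec : ∀ k, a (k + 1) ≤ a k - γ * s k) :
    Tendsto s atTop (𝓝 0) := by
  have hsum : ∀ n, γ * ∑ k ∈ Finset.range n, s k ≤ a 0 - a n := by
    intro n
    induction n with
    | zero => simp
    | succ n ih => rw [Finset.sum_range_succ, mul_add]; linarith [hdec n]
  refine (summable_of_sum_range_le (c := a 0 / γ) hs fun n => ?_).tendsto_atTop_zero
  rw [le_div_iff₀' hγ]
  linarith [hsum n, ha n]

namespace LinearMap.BilinForm

section Normed

variable {E : Type*} [NormedAddCommGroup E] [NormedSpace ℝ E] [FiniteDimensional ℝ E]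

theorem continuous_apply_apply (B : LinearMap.BilinForm ℝ E) {F : Type*} [TopologicalSpace F]
    {f g : F → E} (hf : Continuous f) (hg : Continuous g) : Continuous fun y => B (f y) (g y) :=
  B.toContinuousBilinearMap.continuous₂.comp (hf.prodMk hg)

theorem exists_pos_mul_sq_norm_le (B : LinearMap.BilinForm ℝ E) (hB : ∀ v ≠ 0, 0 < B v v) :
    ∃ c > 0, ∀ v, c * ‖v‖ ^ 2 ≤ B v v := by
  rcases subsingleton_or_nontrivial E with hE | hE
  · exact ⟨1, one_pos, fun v => by simp [Subsingleton.elim v 0]⟩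
  obtain ⟨u, hu, hmin⟩ := (isCompact_sphere (0 : E) 1).exists_isMinOn
    (NormedSpace.sphere_nonempty.2 zero_le_one)
    (B.continuous_apply_apply continuous_id' continuous_id').continuousOn
  refine ⟨B u u, hB u (ne_zero_of_mem_unit_sphere ⟨u, hu⟩), fun v => ?_⟩
  rcases eq_or_ne v 0 with rfl | hv
  · simp
  have hv' : 0 < ‖v‖ := norm_pos_iff.2 hv
  have hmem : ‖v‖⁻¹ • v ∈ Metric.sphere (0 : E) 1 := by simp [norm_smul, hv'.ne']
  have hle : B u u ≤ ‖v‖⁻¹ * (‖v‖⁻¹ * B v v) := by simpa using hmin hmem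
  calc B u u * ‖v‖ ^ 2 ≤ ‖v‖⁻¹ * (‖v‖⁻¹ * B v v) * ‖v‖ ^ 2 := by gcongr
    _ = B v v := by field_simp

end Normed

variable {M : Type*} [AddCommGroup M] [Module ℝ M]

theorem apply_sub_smul_sub_smul (B : LinearMap.BilinForm ℝ M) (hB : B.IsSymm) (a d : M)
    (t : ℝ) : B (a - t • d) (a - t • d) = B a a - 2 * t * B a d + t ^ 2 * B d d := by
  simp only [map_sub, map_smul, LinearMap.sub_apply, LinearMap.smul_apply, smul_eq_mul,
    hB.eq d a]
  ring

theorem apply_relaxation_le (B : LinearMap.BilinForm ℝ M) (hB : B.IsSymm) {w wbar s : M}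
    {α : ℝ} (hα : 0 ≤ α) (h : B (w - wbar) (w - wbar) ≤ B (w - s) (w - wbar)) :
    B (w - α • (w - wbar) - s) (w - α • (w - wbar) - s) ≤
      B (w - s) (w - s) - α * (2 - α) * B (w - wbar) (w - wbar) := by
  rw [sub_right_comm, apply_sub_smul_sub_smul B hB]
  nlinarith [mul_le_mul_of_nonneg_left h hα]

end LinearMap.BilinForm

theorem IsMinOn.prox_optimality {ι : Type*} [Fintype ι] {θ : (ι → ℝ) → ℝ} {X : Set (ι → ℝ)}
    (hθ : ConvexOn ℝ X θ) {β : ℝ} {p xb z : ι → ℝ}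
    (hmin : IsMinOn (fun y => θ y + β / 2 * ((y - p) ⬝ᵥ (y - p))) X xb) (hxb : xb ∈ X)
    (hz : z ∈ X) : 0 ≤ θ z - θ xb + β * ((z - xb) ⬝ᵥ (xb - p)) := by
  set G := θ z - θ xb + β * ((z - xb) ⬝ᵥ (xb - p))
  set Q := β / 2 * ((z - xb) ⬝ᵥ (z - xb))
  have hsmall : ∀ t ∈ Ioo (0 : ℝ) 1, 0 ≤ G + t * Q := by
    rintro t ⟨ht0, ht1⟩
    have hseg : xb + t • (z - xb) = (1 - t) • xb + t • z := by module
    have hconv : θ (xb + t • (z - xb)) ≤ (1 - t) * θ xb + t * θ z := by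
      rw [hseg]; exact hθ.2 hxb hz (by linarith) ht0.le (by ring)
    have hm := hmin (hθ.1.add_smul_sub_mem hxb hz ⟨ht0.le, ht1.le⟩)
    have hsq : (xb + t • (z - xb) - p) ⬝ᵥ (xb + t • (z - xb) - p) =
        (xb - p) ⬝ᵥ (xb - p) + 2 * t * ((z - xb) ⬝ᵥ (xb - p)) + t ^ 2 * ((z - xb) ⬝ᵥ (z - xb)) := by
      rw [show xb + t • (z - xb) - p = (xb - p) + t • (z - xb) by abel]
      simp only [add_dotProduct, dotProduct_add, smul_dotProduct, dotProduct_smul, smul_eq_mul,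
        dotProduct_comm (xb - p) (z - xb)]
      ring
    simp only [mem_ofPred_eq, hsq] at hm
    have : 0 ≤ t * (G + t * Q) := by simp only [G, Q]; linear_combination hm + hconv
    exact nonneg_of_mul_nonneg_right (by linarith) ht0
  have hlim : Tendsto (fun t => G + t * Q) (𝓝[>] 0) (𝓝 (G + 0 * Q)) :=
    ((continuous_const.add (continuous_id.mul continuous_const)).tendsto 0).mono_left
      nhdsWithin_le_nhds
  simpa using ge_of_tendsto hlim (eventually_of_mem (Ioo_mem_nhdsGT one_pos) hsmall)

noncomputable section BalancedALM

variable {ι κ : Type*} [Fintype ι] [Fintype κ]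

def viGap (θ : (ι → ℝ) → ℝ) (A : Matrix κ ι ℝ) (b : κ → ℝ) (w v : (ι → ℝ) × (κ → ℝ)) : ℝ :=
  θ v.1 - θ w.1 + (v.1 - w.1) ⬝ᵥ (-(Aᵀ *ᵥ w.2)) + (v.2 - w.2) ⬝ᵥ (A *ᵥ w.1 - b)

def solutionSet (θ : (ι → ℝ) → ℝ) (X : Set (ι → ℝ)) (A : Matrix κ ι ℝ) (b : κ → ℝ) :
    Set ((ι → ℝ) × (κ → ℝ)) :=
  {w | w.1 ∈ X ∧ ∀ v : (ι → ℝ) × (κ → ℝ), v.1 ∈ X → 0 ≤ viGap θ A b w v}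

theorem viGap_add_viGap_swap (θ : (ι → ℝ) → ℝ) (A : Matrix κ ι ℝ) (b : κ → ℝ)
    (w v : (ι → ℝ) × (κ → ℝ)) : viGap θ A b w v + viGap θ A b v w = 0 := by
  simp only [viGap, dotProduct_neg, dotProduct_sub, sub_dotProduct,
    dotProduct_mulVec_eq_transpose A, mulVec_sub]
  ring

theorem continuous_viGap_left {θ : (ι → ℝ) → ℝ} (hθ : Continuous θ) (A : Matrix κ ι ℝ) (b : κ → ℝ)
    (v : (ι → ℝ) × (κ → ℝ)) : Continuous fun w => viGap θ A b w v := by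
  unfold viGap
  fun_prop

theorem mem_solutionSet_of_tendsto {θ : (ι → ℝ) → ℝ} (hθ : Continuous θ) {X : Set (ι → ℝ)}
    (hX : IsClosed X) {A : Matrix κ ι ℝ} {b : κ → ℝ} (H : LinearMap.BilinForm ℝ ((ι → ℝ) × (κ → ℝ)))
    {α : Type*} {l : Filter α} [l.NeBot] {w wbar : α → (ι → ℝ) × (κ → ℝ)} {p : (ι → ℝ) × (κ → ℝ)}
    (hwbar : Tendsto wbar l (𝓝 p)) (hres : Tendsto (fun k => w k - wbar k) l (𝓝 0))
    (hmem : ∀ k, (wbar k).1 ∈ X)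
    (hpred : ∀ k v, v.1 ∈ X → H (v - wbar k) (w k - wbar k) ≤ viGap θ A b (wbar k) v) :
    p ∈ solutionSet θ X A b := by
  refine ⟨hX.mem_of_tendsto ((continuous_fst.tendsto p).comp hwbar) (.of_forall hmem),
    fun v hv => ?_⟩
  have hH : Tendsto (fun k => H (v - wbar k) (w k - wbar k)) l (𝓝 (H (v - p) 0)) :=
    ((H.continuous_apply_apply (continuous_const.sub continuous_fst) continuous_snd).tendsto
      (p, 0)).comp (hwbar.prodMk_nhds hres)
  have hgap := ((continuous_viGap_left hθ A b v).tendsto p).comp hwbar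
  simpa using le_of_tendsto_of_tendsto hH hgap (.of_forall fun k => hpred k v hv)

theorem exists_tendsto_mem_solutionSet {θ : (ι → ℝ) → ℝ} (hθ : Continuous θ) {X : Set (ι → ℝ)}
    (hX : IsClosed X) {A : Matrix κ ι ℝ} {b : κ → ℝ} (H : LinearMap.BilinForm ℝ ((ι → ℝ) × (κ → ℝ)))
    (hHs : H.IsSymm) (hHpos : ∀ v ≠ 0, 0 < H v v) (hS : (solutionSet θ X A b).Nonempty) {α : ℝ}
    (hα : α ∈ Ioo 0 2) {w wbar : ℕ → (ι → ℝ) × (κ → ℝ)} (hmem : ∀ k, (wbar k).1 ∈ X)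
    (hpred : ∀ k v, v.1 ∈ X → H (v - wbar k) (w k - wbar k) ≤ viGap θ A b (wbar k) v)
    (hupd : ∀ k, w (k + 1) = w k - α • (w k - wbar k)) :
    ∃ p ∈ solutionSet θ X A b, Tendsto w atTop (𝓝 p) := by
  obtain ⟨c, hc, hcoer⟩ := H.exists_pos_mul_sq_norm_le hHpos
  have hnn : ∀ v, 0 ≤ H v v := fun v => (mul_nonneg hc.le (sq_nonneg _)).trans (hcoer v)
  have hγ : 0 < α * (2 - α) := mul_pos hα.1 (by linarith [hα.2])
  have hcontr : ∀ s ∈ solutionSet θ X A b, ∀ k, H (w (k + 1) - s) (w (k + 1) - s) ≤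
      H (w k - s) (w k - s) - α * (2 - α) * H (w k - wbar k) (w k - wbar k) := by
    intro s hs k
    rw [hupd k]
    refine H.apply_relaxation_le hHs hα.1.le ?_
    have hgap : H (s - wbar k) (w k - wbar k) ≤ 0 := by
      linarith [hpred k s hs.1, hs.2 (wbar k) (hmem k), viGap_add_viGap_swap θ A b s (wbar k)]
    have hsplit : H (w k - s) (w k - wbar k) =
        H (w k - wbar k) (w k - wbar k) - H (s - wbar k) (w k - wbar k) := by
      rw [← LinearMap.sub_apply, ← map_sub, sub_sub_sub_cancel_right]
    linarith
  have hres : Tendsto (fun k => w k - wbar k) atTop (𝓝 0) := by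
    obtain ⟨s, hs⟩ := hS
    exact tendsto_zero_of_coercive hc hcoer
      (tendsto_zero_of_le_sub_mul (a := fun k => H (w k - s) (w k - s)) hγ (fun _ => hnn _)
        (fun _ => hnn _) (hcontr s hs))
  refine exists_tendsto_of_fejer (H.continuous_apply_apply continuous_id' continuous_id')
    (by simp) hc hcoer hS (fun s hs => antitone_nat_of_succ_le fun k => ?_) fun φ p hφ hwφ => ?_
  · nlinarith [hcontr s hs k, hnn (w k - wbar k)]
  · have hresφ := hres.comp hφ.tendsto_atTop
    exact mem_solutionSet_of_tendsto hθ hX H (by simpa using hwφ.sub hresφ) hresφ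
      (fun j => hmem (φ j)) fun j => hpred (φ j)

variable [DecidableEq κ]

def proxCenter (A : Matrix κ ι ℝ) (β : ℝ) (w wbar : (ι → ℝ) × (κ → ℝ)) : ι → ℝ :=
  w.1 + (1 / β) • (Aᵀ *ᵥ ((2 : ℝ) • wbar.2 - w.2))

def balancedMatrix (A : Matrix κ ι ℝ) (β δ : ℝ) : Matrix κ κ ℝ :=
  (1 / β) • (A * Aᵀ) + δ • (1 : Matrix κ κ ℝ)

/-- `wᵀ H w'` for the block matrix `H = [[β I, -Aᵀ], [-A, M]]`, `M = balancedMatrix A β δ`. -/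
def hForm (A : Matrix κ ι ℝ) (β δ : ℝ) : LinearMap.BilinForm ℝ ((ι → ℝ) × (κ → ℝ)) :=
  LinearMap.mk₂ ℝ
    (fun w w' => β * (w.1 ⬝ᵥ w'.1) - w.1 ⬝ᵥ (Aᵀ *ᵥ w'.2) - w.2 ⬝ᵥ (A *ᵥ w'.1) +
      w.2 ⬝ᵥ (balancedMatrix A β δ *ᵥ w'.2))
    (fun _ _ _ => by simp only [Prod.fst_add, Prod.snd_add, add_dotProduct]; ring)
    (fun _ _ _ => by simp only [Prod.smul_fst, Prod.smul_snd, smul_dotProduct, smul_eq_mul]; ring)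
    (fun _ _ _ => by
      simp only [Prod.fst_add, Prod.snd_add, mulVec_add, dotProduct_add]; ring)
    (fun _ _ _ => by
      simp only [Prod.smul_fst, Prod.smul_snd, mulVec_smul, dotProduct_smul, smul_eq_mul]; ring)

theorem hForm_apply (A : Matrix κ ι ℝ) (β δ : ℝ) (w w' : (ι → ℝ) × (κ → ℝ)) :
    hForm A β δ w w' = β * (w.1 ⬝ᵥ w'.1) - w.1 ⬝ᵥ (Aᵀ *ᵥ w'.2) - w.2 ⬝ᵥ (A *ᵥ w'.1) +
      w.2 ⬝ᵥ (balancedMatrix A β δ *ᵥ w'.2) := rfl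

theorem hForm_apply_eq_add (A : Matrix κ ι ℝ) {β : ℝ} (hβ : β ≠ 0) (δ : ℝ)
    (w w' : (ι → ℝ) × (κ → ℝ)) :
    hForm A β δ w w' = β * ((w.1 - β⁻¹ • (Aᵀ *ᵥ w.2)) ⬝ᵥ (w'.1 - β⁻¹ • (Aᵀ *ᵥ w'.2))) +
      δ * (w.2 ⬝ᵥ w'.2) := by
  simp only [hForm_apply, balancedMatrix, add_mulVec, smul_mulVec, ← mulVec_mulVec, one_mulVec,
    dotProduct_add, dotProduct_smul, dotProduct_sub, sub_dotProduct, smul_dotProduct, smul_eq_mul,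
    dotProduct_mulVec_eq_transpose A, dotProduct_comm w'.1,
    dotProduct_comm (Aᵀ *ᵥ w'.2)]
  field_simp
  ring

theorem hForm_isSymm (A : Matrix κ ι ℝ) {β : ℝ} (hβ : β ≠ 0) (δ : ℝ) : (hForm A β δ).IsSymm :=
  ⟨fun w w' => by simp only [hForm_apply_eq_add A hβ, dotProduct_comm]⟩

theorem hForm_pos (A : Matrix κ ι ℝ) {β δ : ℝ} (hβ : 0 < β) (hδ : 0 < δ)
    {w : (ι → ℝ) × (κ → ℝ)} (hw : w ≠ 0) : 0 < hForm A β δ w w := by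
  rw [hForm_apply_eq_add A hβ.ne']
  have h1 := dotProduct_self_nonneg (w.1 - β⁻¹ • (Aᵀ *ᵥ w.2))
  rcases eq_or_ne w.2 0 with h2 | h2
  · have : 0 < w.1 ⬝ᵥ w.1 := dotProduct_self_pos fun h1 => hw (Prod.ext h1 h2)
    simp only [h2, mulVec_zero, smul_zero, sub_zero, dotProduct_zero, mul_zero, add_zero]
    positivity
  · have := dotProduct_self_pos h2
    positivity

theorem viGap_sub_hForm (θ : (ι → ℝ) → ℝ) (A : Matrix κ ι ℝ) (b : κ → ℝ) {β : ℝ} (hβ : β ≠ 0)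
    (δ : ℝ) (w wbar v : (ι → ℝ) × (κ → ℝ)) :
    viGap θ A b wbar v - hForm A β δ (v - wbar) (w - wbar) =
      (θ v.1 - θ wbar.1 + β * ((v.1 - wbar.1) ⬝ᵥ (wbar.1 - proxCenter A β w wbar))) +
      (v.2 - wbar.2) ⬝ᵥ (A *ᵥ w.1 - b + balancedMatrix A β δ *ᵥ (wbar.2 - w.2)) := by
  simp only [viGap, hForm_apply, proxCenter, Prod.fst_sub, Prod.snd_sub, mulVec_sub, mulVec_smul,
    dotProduct_neg, dotProduct_sub, dotProduct_add, dotProduct_smul, smul_eq_mul]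
  field_simp
  ring

theorem hForm_le_viGap_of_predictor {θ : (ι → ℝ) → ℝ} {X : Set (ι → ℝ)} (hθ : ConvexOn ℝ X θ)
    {A : Matrix κ ι ℝ} {b : κ → ℝ} {β : ℝ} (hβ : 0 < β) {δ : ℝ} {w wbar : (ι → ℝ) × (κ → ℝ)}
    (hdual : A *ᵥ w.1 - b + balancedMatrix A β δ *ᵥ (wbar.2 - w.2) = 0) (hmem : wbar.1 ∈ X)
    (hmin : IsMinOn (fun z => θ z + β / 2 * ((z - proxCenter A β w wbar) ⬝ᵥ
      (z - proxCenter A β w wbar))) X wbar.1)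
    {v : (ι → ℝ) × (κ → ℝ)} (hv : v.1 ∈ X) :
    hForm A β δ (v - wbar) (w - wbar) ≤ viGap θ A b wbar v := by
  have hid := viGap_sub_hForm θ A b hβ.ne' δ w wbar v
  rw [hdual, dotProduct_zero, add_zero] at hid
  linarith [hmin.prox_optimality hθ hmem hv]

end BalancedALM

theorem stmt_13_general {n m : ℕ} (θ : (Fin n → ℝ) → ℝ) (hθ : ConvexOn ℝ Set.univ θ)
    (hθc : Continuous θ)
    (X : Set (Fin n → ℝ)) (hXclosed : IsClosed X) (hXconv : Convex ℝ X)
    (A : Matrix (Fin m) (Fin n) ℝ) (b : Fin m → ℝ) (β δ α : ℝ) (hβ : 0 < β) (hδ : 0 < δ)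
    (hα : α ∈ Set.Ioo (0 : ℝ) 2)
    (hsol : ∃ xstar ∈ X, ∃ lstar : Fin m → ℝ, ∀ x ∈ X, ∀ lam : Fin m → ℝ,
      θ x - θ xstar + (x - xstar) ⬝ᵥ (-(Aᵀ *ᵥ lstar)) + (lam - lstar) ⬝ᵥ (A *ᵥ xstar - b) ≥ 0)
    (x xbar : ℕ → Fin n → ℝ) (l lbar : ℕ → Fin m → ℝ)
    (hdual : ∀ k : ℕ, A *ᵥ x k - b +
      (((1 / β) • (A * Aᵀ) + δ • (1 : Matrix (Fin m) (Fin m) ℝ)) *ᵥ (lbar k - l k)) = 0)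
    (hprimal : ∀ k : ℕ, xbar k ∈ X ∧ ∀ z ∈ X,
      θ (xbar k) + (β / 2) *
        ((xbar k - (x k + (1 / β) • (Aᵀ *ᵥ ((2 : ℝ) • lbar k - l k)))) ⬝ᵥ
         (xbar k - (x k + (1 / β) • (Aᵀ *ᵥ ((2 : ℝ) • lbar k - l k))))) ≤
      θ z + (β / 2) *
        ((z - (x k + (1 / β) • (Aᵀ *ᵥ ((2 : ℝ) • lbar k - l k)))) ⬝ᵥ
         (z - (x k + (1 / β) • (Aᵀ *ᵥ ((2 : ℝ) • lbar k - l k))))))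
    (hupdx : ∀ k : ℕ, x (k + 1) = x k - α • (x k - xbar k))
    (hupdl : ∀ k : ℕ, l (k + 1) = l k - α • (l k - lbar k)) :
    ∃ xinf ∈ X, ∃ linf : Fin m → ℝ,
      (∀ z ∈ X, ∀ lam : Fin m → ℝ,
        θ z - θ xinf + (z - xinf) ⬝ᵥ (-(Aᵀ *ᵥ linf)) + (lam - linf) ⬝ᵥ (A *ᵥ xinf - b) ≥ 0) ∧
      Tendsto x atTop (nhds xinf) ∧ Tendsto l atTop (nhds linf) := by
  obtain ⟨xs, hxs, ls, hxls⟩ := hsol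
  set w : ℕ → (Fin n → ℝ) × (Fin m → ℝ) := fun k => (x k, l k)
  set wbar : ℕ → (Fin n → ℝ) × (Fin m → ℝ) := fun k => (xbar k, lbar k)
  have hpred : ∀ k v, v.1 ∈ X → hForm A β δ (v - wbar k) (w k - wbar k) ≤ viGap θ A b (wbar k) v :=
    fun k v hv => hForm_le_viGap_of_predictor (hθ.subset (subset_univ X) hXconv) hβ (hdual k)
      (hprimal k).1 (isMinOn_iff.2 (hprimal k).2) hv
  obtain ⟨p, ⟨hpX, hp⟩, hwp⟩ := exists_tendsto_mem_solutionSet hθc hXclosed (hForm A β δ)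
    (hForm_isSymm A hβ.ne' δ) (fun v hv => hForm_pos A hβ hδ hv)
    ⟨(xs, ls), hxs, fun v hv => hxls v.1 hv v.2⟩ hα (fun k => (hprimal k).1) hpred
    fun k => Prod.ext (hupdx k) (hupdl k)
  exact ⟨p.1, hpX, p.2, fun z hz lam => hp (z, lam) hz, (continuous_fst.tendsto p).comp hwp,
    (continuous_snd.tendsto p).comp hwp⟩

/-- Global convergence of the dual-primal balanced ALM: with `β, δ > 0`,
`α ∈ (0,2)`, `M = (1/β) A Aᵀ + δ Iₘ`, a nonempty solution set `Ω*`, and iterates generated by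
`A xᵏ - b + M (λ̄ᵏ - λᵏ) = 0`,
`x̄ᵏ ∈ argmin {θ x + (β/2) ‖x - [xᵏ + (1/β) Aᵀ (2λ̄ᵏ - λᵏ)]‖² : x ∈ X}`,
`wᵏ⁺¹ = wᵏ - α (wᵏ - w̄ᵏ)`, the sequence `{wᵏ}` converges to some `w^∞ ∈ Ω*`. -/
theorem stmt_13 {n m : ℕ} (θ : (Fin n → ℝ) → ℝ) (hθ : ConvexOn ℝ Set.univ θ)
    (hθc : Continuous θ)
    (X : Set (Fin n → ℝ)) (hXne : X.Nonempty) (hXclosed : IsClosed X) (hXconv : Convex ℝ X)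
    (A : Matrix (Fin m) (Fin n) ℝ) (b : Fin m → ℝ) (β δ α : ℝ) (hβ : 0 < β) (hδ : 0 < δ)
    (hα : α ∈ Set.Ioo (0 : ℝ) 2)
    (hsol : ∃ xstar ∈ X, ∃ lstar : Fin m → ℝ, ∀ x ∈ X, ∀ lam : Fin m → ℝ,
      θ x - θ xstar + (x - xstar) ⬝ᵥ (-(Aᵀ *ᵥ lstar)) + (lam - lstar) ⬝ᵥ (A *ᵥ xstar - b) ≥ 0)
    (x xbar : ℕ → Fin n → ℝ) (l lbar : ℕ → Fin m → ℝ)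
    (hx0 : x 0 ∈ X)
    (hdual : ∀ k : ℕ, A *ᵥ x k - b +
      (((1 / β) • (A * Aᵀ) + δ • (1 : Matrix (Fin m) (Fin m) ℝ)) *ᵥ (lbar k - l k)) = 0)
    (hprimal : ∀ k : ℕ, xbar k ∈ X ∧ ∀ z ∈ X,
      θ (xbar k) + (β / 2) *
        ((xbar k - (x k + (1 / β) • (Aᵀ *ᵥ ((2 : ℝ) • lbar k - l k)))) ⬝ᵥ
         (xbar k - (x k + (1 / β) • (Aᵀ *ᵥ ((2 : ℝ) • lbar k - l k))))) ≤
      θ z + (β / 2) *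
        ((z - (x k + (1 / β) • (Aᵀ *ᵥ ((2 : ℝ) • lbar k - l k)))) ⬝ᵥ
         (z - (x k + (1 / β) • (Aᵀ *ᵥ ((2 : ℝ) • lbar k - l k))))))
    (hupdx : ∀ k : ℕ, x (k + 1) = x k - α • (x k - xbar k))
    (hupdl : ∀ k : ℕ, l (k + 1) = l k - α • (l k - lbar k)) :
    ∃ xinf ∈ X, ∃ linf : Fin m → ℝ,
      (∀ z ∈ X, ∀ lam : Fin m → ℝ,
        θ z - θ xinf + (z - xinf) ⬝ᵥ (-(Aᵀ *ᵥ linf)) + (lam - linf) ⬝ᵥ (A *ᵥ xinf - b) ≥ 0) ∧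
      Tendsto x atTop (nhds xinf) ∧ Tendsto l atTop (nhds linf) :=
  stmt_13_general θ hθ hθc X hXclosed hXconv A b β δ α hβ hδ hα hsol x xbar l lbar hdual hprimal
    hupdx hupdl
end

section
/- Let p ≥ 1; for i = 1,…,p let θᵢ : ℝ^{n_i} → ℝ be convex, Xᵢ ⊆ ℝ^{n_i} nonempty closed convex, Aᵢ ∈ ℝ^{m×n_i}, βᵢ > 0; let b ∈ ℝᵐ, δ > 0, let Λ ⊆ ℝᵐ be a nonempty closed convex set (Λ = ℝᵐ for equality constraints, Λ = ℝ₊ᵐ for inequality constraints), and set M_p = Σ_{i=1}^p (1/βᵢ)AᵢAᵢᵀ + δIₘ. Given wᵏ = (x₁ᵏ,…,x_pᵏ,λᵏ), suppose λ̄ᵏ ∈ argmin{(1/2)(λ − λᵏ)ᵀM_p(λ − λᵏ) + λᵀ(Σ_{i=1}^p Aᵢxᵢᵏ − b) : λ ∈ Λ} and, for each i, x̄ᵢᵏ ∈ argmin{θᵢ(xᵢ) + (βᵢ/2)‖xᵢ − [xᵢᵏ + (1/βᵢ)Aᵢᵀ(2λ̄ᵏ − λᵏ)]‖² : xᵢ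 ∈ Xᵢ}. Then, with w̄ᵏ = (x̄₁ᵏ,…,x̄_pᵏ,λ̄ᵏ), for every w = (x₁,…,x_p,λ) ∈ X₁×⋯×X_p×Λ, Σ_{i=1}^p θᵢ(xᵢ) − Σ_{i=1}^p θᵢ(x̄ᵢᵏ) + (w − w̄ᵏ)ᵀF(w̄ᵏ) ≥ (w − w̄ᵏ)ᵀH(wᵏ − w̄ᵏ). -/
open Matrix Set

private lemma limit_le {a b C : ℝ} (h : ∀ t : ℝ, 0 < t → t ≤ 1 → a ≤ b + t * C) : a ≤ b := by
  by_contra hc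
  push_neg at hc
  have hε : 0 < a - b := by linarith
  set t := min 1 ((a - b) / (2 * (|C| + 1))) with ht
  have ht0 : 0 < t := lt_min one_pos (by positivity)
  have ht1 : t ≤ 1 := min_le_left _ _
  have h2 := h t ht0 ht1
  have h3 : t * C ≤ t * |C| := mul_le_mul_of_nonneg_left (le_abs_self C) ht0.le
  have ht2 : t ≤ (a - b) / (2 * (|C| + 1)) := min_le_right _ _
  have h4 : t * |C| ≤ (a - b) / 2 := by
    calc t * |C| ≤ ((a - b) / (2 * (|C| + 1))) * |C| :=
          mul_le_mul_of_nonneg_right ht2 (abs_nonneg C)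
      _ ≤ (a - b) / 2 := by
          rw [div_mul_eq_mul_div, div_le_div_iff₀ (by positivity) (by norm_num)]
          nlinarith [abs_nonneg C]
  linarith

private lemma prox_vi {n : ℕ} {f : (Fin n → ℝ) → ℝ} (hf : ConvexOn ℝ Set.univ f)
    {S : Set (Fin n → ℝ)} (hS : Convex ℝ S) {β : ℝ} (hβ : 0 < β)
    {c xb : Fin n → ℝ} (hxb : xb ∈ S)
    (hmin : ∀ z ∈ S, f xb + (β / 2) * ((xb - c) ⬝ᵥ (xb - c)) ≤
      f z + (β / 2) * ((z - c) ⬝ᵥ (z - c))) :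
    ∀ x ∈ S, 0 ≤ f x - f xb + (x - xb) ⬝ᵥ (β • (xb - c)) := by
  intro x hx
  set D : ℝ := (x - xb) ⬝ᵥ (xb - c) with hD
  set N : ℝ := (x - xb) ⬝ᵥ (x - xb) with hN
  have key : f xb ≤ f x + β * D := by
    apply limit_le (C := (β / 2) * N)
    intro t ht0 ht1
    have hz : xb + t • (x - xb) ∈ S := by
      have := hS hxb hx (by linarith : (0:ℝ) ≤ 1 - t) ht0.le (by ring)
      convert this using 1
      ext j; simp [smul_sub]; ring
    have hvec : (1 - t) • xb + t • x = xb + t • (x - xb) := by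
      ext j; simp [smul_sub]; ring
    have hconv : f (xb + t • (x - xb)) ≤ (1 - t) * f xb + t * f x := by
      have h5 := hf.2 (Set.mem_univ xb) (Set.mem_univ x)
        (by linarith : (0:ℝ) ≤ 1 - t) ht0.le (by ring)
      rw [hvec] at h5
      simpa [smul_eq_mul] using h5
    have hquad : ((xb + t • (x - xb)) - c) ⬝ᵥ ((xb + t • (x - xb)) - c) =
        (xb - c) ⬝ᵥ (xb - c) + 2 * t * D + t ^ 2 * N := by
      have h1 : (xb + t • (x - xb)) - c = (xb - c) + t • (x - xb) := by
        ext j; simp; ring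
      rw [h1, add_dotProduct, dotProduct_add, dotProduct_add, dotProduct_smul,
        smul_dotProduct, smul_dotProduct, dotProduct_smul, hD, hN,
        dotProduct_comm (xb - c) (x - xb)]
      simp [smul_eq_mul]; ring
    have h2 := hmin _ hz
    rw [hquad] at h2
    have h3 : t * f xb ≤ t * (f x + β * D + t * ((β / 2) * N)) := by nlinarith
    exact le_of_mul_le_mul_left h3 ht0
  have : (x - xb) ⬝ᵥ (β • (xb - c)) = β * D := by rw [dotProduct_smul, hD, smul_eq_mul]
  linarith

private lemma dot_sym {m : ℕ} {M : Matrix (Fin m) (Fin m) ℝ} (hM : Mᵀ = M)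
    (u d : Fin m → ℝ) : u ⬝ᵥ (M *ᵥ d) = d ⬝ᵥ (M *ᵥ u) := by
  rw [dotProduct_mulVec, ← mulVec_transpose, hM, dotProduct_comm]

private lemma quad_vi {m : ℕ} {M : Matrix (Fin m) (Fin m) ℝ} (hM : Mᵀ = M)
    {S : Set (Fin m → ℝ)} (hS : Convex ℝ S) {lk lb q : Fin m → ℝ} (hlb : lb ∈ S)
    (hmin : ∀ z ∈ S, (1 / 2) * ((lb - lk) ⬝ᵥ (M *ᵥ (lb - lk))) + lb ⬝ᵥ q ≤
      (1 / 2) * ((z - lk) ⬝ᵥ (M *ᵥ (z - lk))) + z ⬝ᵥ q) :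
    ∀ l ∈ S, 0 ≤ (l - lb) ⬝ᵥ (M *ᵥ (lb - lk)) + (l - lb) ⬝ᵥ q := by
  intro l hl
  set d : Fin m → ℝ := l - lb with hd
  set u : Fin m → ℝ := lb - lk with hu
  have key : (0:ℝ) ≤ d ⬝ᵥ (M *ᵥ u) + d ⬝ᵥ q := by
    rw [← neg_nonpos, ← sub_zero (-(d ⬝ᵥ (M *ᵥ u) + d ⬝ᵥ q))]
    rw [sub_zero]
    apply limit_le (C := (1 / 2) * (d ⬝ᵥ (M *ᵥ d)))
    intro t ht0 ht1
    have hz : lb + t • d ∈ S := by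
      have := hS hlb hl (by linarith : (0:ℝ) ≤ 1 - t) ht0.le (by ring)
      convert this using 1
      ext j; simp [hd, smul_sub]; ring
    have h2 := hmin _ hz
    have hzu : (lb + t • d) - lk = u + t • d := by ext j; simp [hu]; ring
    rw [hzu] at h2
    have hexp : (u + t • d) ⬝ᵥ (M *ᵥ (u + t • d)) =
        u ⬝ᵥ (M *ᵥ u) + 2 * t * (d ⬝ᵥ (M *ᵥ u)) + t ^ 2 * (d ⬝ᵥ (M *ᵥ d)) := by
      rw [mulVec_add, mulVec_smul, add_dotProduct, dotProduct_add, dotProduct_add,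
        dotProduct_smul, smul_dotProduct, smul_dotProduct, dotProduct_smul,
        dot_sym hM u d]
      simp [smul_eq_mul]; ring
    have hlin : (lb + t • d) ⬝ᵥ q = lb ⬝ᵥ q + t * (d ⬝ᵥ q) := by
      rw [add_dotProduct, smul_dotProduct, smul_eq_mul]
    rw [hexp, hlin] at h2
    have h3 : t * 0 ≤ t * (d ⬝ᵥ (M *ᵥ u) + d ⬝ᵥ q + t * ((1 / 2) * (d ⬝ᵥ (M *ᵥ d)))) := by
      nlinarith
    have h4 := le_of_mul_le_mul_left h3 ht0
    linarith
  linarith [key]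

/-- Prediction step of the generalized dual-primal balanced ALM for the
separable program: with `M_p = Σᵢ (1/βᵢ) Aᵢ Aᵢᵀ + δ Iₘ`, if `λ̄ᵏ` minimizes
`(1/2)(λ - λᵏ)ᵀ M_p (λ - λᵏ) + λᵀ(Σᵢ Aᵢ xᵢᵏ - b)` over `Λ` and each `x̄ᵢᵏ` minimizes
`θᵢ(xᵢ) + (βᵢ/2) ‖xᵢ - [xᵢᵏ + (1/βᵢ) Aᵢᵀ (2λ̄ᵏ - λᵏ)]‖²` over `Xᵢ`, then for every
`w = (x₁,…,x_p,λ) ∈ X₁ × ⋯ × X_p × Λ`,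
`Σᵢ θᵢ(xᵢ) - Σᵢ θᵢ(x̄ᵢᵏ) + (w - w̄ᵏ)ᵀ F(w̄ᵏ) ≥ (w - w̄ᵏ)ᵀ H (wᵏ - w̄ᵏ)`,
where the `H`-pairing is written blockwise. -/
theorem stmt_16 {p m : ℕ} (hp : 1 ≤ p) (n : Fin p → ℕ)
    (θ : ∀ i : Fin p, (Fin (n i) → ℝ) → ℝ) (hθ : ∀ i, ConvexOn ℝ Set.univ (θ i))
    (X : ∀ i : Fin p, Set (Fin (n i) → ℝ))
    (hXne : ∀ i, (X i).Nonempty) (hXclosed : ∀ i, IsClosed (X i)) (hXconv : ∀ i, Convex ℝ (X i))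
    (A : ∀ i : Fin p, Matrix (Fin m) (Fin (n i)) ℝ) (b : Fin m → ℝ)
    (β : Fin p → ℝ) (hβ : ∀ i, 0 < β i) (δ : ℝ) (hδ : 0 < δ)
    (Λ : Set (Fin m → ℝ)) (hΛne : Λ.Nonempty) (hΛclosed : IsClosed Λ) (hΛconv : Convex ℝ Λ)
    (xk xbar : ∀ i : Fin p, Fin (n i) → ℝ) (lk lbar : Fin m → ℝ)
    (hlbar : lbar ∈ Λ ∧ ∀ lam ∈ Λ,
      (1 / 2) * ((lbar - lk) ⬝ᵥ
          ((((∑ i, (1 / β i) • (A i * (A i)ᵀ)) + δ • (1 : Matrix (Fin m) (Fin m) ℝ))) *ᵥ (lbar - lk))) +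
          lbar ⬝ᵥ ((∑ i, A i *ᵥ xk i) - b) ≤
        (1 / 2) * ((lam - lk) ⬝ᵥ
          ((((∑ i, (1 / β i) • (A i * (A i)ᵀ)) + δ • (1 : Matrix (Fin m) (Fin m) ℝ))) *ᵥ (lam - lk))) +
          lam ⬝ᵥ ((∑ i, A i *ᵥ xk i) - b))
    (hxbar : ∀ i : Fin p, xbar i ∈ X i ∧ ∀ z ∈ X i,
      θ i (xbar i) + (β i / 2) *
          ((xbar i - (xk i + (1 / β i) • ((A i)ᵀ *ᵥ ((2 : ℝ) • lbar - lk)))) ⬝ᵥ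
           (xbar i - (xk i + (1 / β i) • ((A i)ᵀ *ᵥ ((2 : ℝ) • lbar - lk))))) ≤
        θ i z + (β i / 2) *
          ((z - (xk i + (1 / β i) • ((A i)ᵀ *ᵥ ((2 : ℝ) • lbar - lk)))) ⬝ᵥ
           (z - (xk i + (1 / β i) • ((A i)ᵀ *ᵥ ((2 : ℝ) • lbar - lk)))))) :
    ∀ (x : ∀ i : Fin p, Fin (n i) → ℝ), (∀ i, x i ∈ X i) → ∀ lam ∈ Λ,
      (∑ i, θ i (x i)) - (∑ i, θ i (xbar i)) +
          ((∑ i, (x i - xbar i) ⬝ᵥ (-((A i)ᵀ *ᵥ lbar))) +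
            (lam - lbar) ⬝ᵥ ((∑ i, A i *ᵥ xbar i) - b)) ≥
        (∑ i, (x i - xbar i) ⬝ᵥ (β i • (xk i - xbar i) - (A i)ᵀ *ᵥ (lk - lbar))) +
          (lam - lbar) ⬝ᵥ (-(∑ i, A i *ᵥ (xk i - xbar i)) +
            (((∑ i, (1 / β i) • (A i * (A i)ᵀ)) + δ • (1 : Matrix (Fin m) (Fin m) ℝ)) *ᵥ (lk - lbar))) := by
  intro x hx lam hlam
  set M : Matrix (Fin m) (Fin m) ℝ :=
    (∑ i, (1 / β i) • (A i * (A i)ᵀ)) + δ • (1 : Matrix (Fin m) (Fin m) ℝ) with hMdef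
  have hMsym : Mᵀ = M := by
    rw [hMdef, Matrix.transpose_add, Matrix.transpose_smul, Matrix.transpose_one]
    congr 1
    rw [Matrix.transpose_sum]
    refine Finset.sum_congr rfl fun i _ => ?_
    rw [Matrix.transpose_smul, Matrix.transpose_mul, Matrix.transpose_transpose]
  -- λ-block variational inequality
  have hq := quad_vi hMsym hΛconv hlbar.1 hlbar.2 lam hlam
  have hs : ∑ i, A i *ᵥ (xk i - xbar i) =
      (∑ i, A i *ᵥ xk i) - (∑ i, A i *ᵥ xbar i) := by
    simp [mulVec_sub, Finset.sum_sub_distrib]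
  have hlkey : 0 ≤ (lam - lbar) ⬝ᵥ ((∑ i, A i *ᵥ xbar i) - b) -
      (lam - lbar) ⬝ᵥ (-(∑ i, A i *ᵥ (xk i - xbar i)) + M *ᵥ (lk - lbar)) := by
    have hveq : ((∑ i, A i *ᵥ xbar i) - b) -
        (-(∑ i, A i *ᵥ (xk i - xbar i)) + M *ᵥ (lk - lbar)) =
        M *ᵥ (lbar - lk) + ((∑ i, A i *ᵥ xk i) - b) := by
      rw [hs, mulVec_sub, mulVec_sub]
      abel
    rw [← dotProduct_sub, hveq, dotProduct_add]
    exact hq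
  -- x-block variational inequalities
  have hxkey : ∀ i, 0 ≤ θ i (x i) - θ i (xbar i) +
      ((x i - xbar i) ⬝ᵥ (-((A i)ᵀ *ᵥ lbar)) -
        (x i - xbar i) ⬝ᵥ (β i • (xk i - xbar i) - (A i)ᵀ *ᵥ (lk - lbar))) := by
    intro i
    have h0 := prox_vi (hθ i) (hXconv i) (hβ i) (hxbar i).1 (hxbar i).2 (x i) (hx i)
    have hb : β i * (1 / β i) = 1 := by rw [mul_one_div, div_self (hβ i).ne']
    have hv : β i • (xbar i - (xk i + (1 / β i) • ((A i)ᵀ *ᵥ ((2 : ℝ) • lbar - lk)))) =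
        -((A i)ᵀ *ᵥ lbar) - (β i • (xk i - xbar i) - (A i)ᵀ *ᵥ (lk - lbar)) := by
      rw [smul_sub, smul_add, smul_smul, hb, one_smul, mulVec_sub, mulVec_smul,
        mulVec_sub, smul_sub]
      ext j; simp [smul_eq_mul]; ring
    rw [hv, dotProduct_sub] at h0
    linarith
  have hsum : 0 ≤ ∑ i, (θ i (x i) - θ i (xbar i) +
      ((x i - xbar i) ⬝ᵥ (-((A i)ᵀ *ᵥ lbar)) -
        (x i - xbar i) ⬝ᵥ (β i • (xk i - xbar i) - (A i)ᵀ *ᵥ (lk - lbar)))) :=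
    Finset.sum_nonneg fun i _ => hxkey i
  rw [Finset.sum_add_distrib, Finset.sum_sub_distrib, Finset.sum_sub_distrib] at hsum
  rw [ge_iff_le]
  linarith
end
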